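/- arXiv:1002.3090 — 8 statements merged into one kernel-verified Lean document; each statement's English description precedes it below -/
import Mathlib

section
/- Let c ∈ [0,1), a ≥ 0, f : ℝ → ℝ with |f(t)| ≤ a|t| for all t, and β, γ > 0. Let (y_n) satisfy y_{n+1} = c·y_n + f(y_n) − f(y_{n−1}) for n ≥ 2, and set V_n = β(y_n − f(y_{n−1}))² + γ(f(y_{n−1}))². Then for all n ≥ 2, V_{n+1} − V_n ≤ −A·y_n² where A = −γa² − (β²/γ)(1−c)² + β(1−c²). -/
/-!
Substituting the recursion gives `y (n+1) - f (y n) = c y_n - f (y_{n-1})`, so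
`V_{n+1} = β (c y_n - f (y_{n-1}))² + γ f(y_n)²` and the new value `f (y_n)` enters only through
`γ f(y_n)² ≤ γ a² y_n²`. What remains of `V_{n+1} - V_n` is `β (c² - 1) y_n²` plus a cross term
`2β(1 - c) y_n f(y_{n-1}) - γ f(y_{n-1})²`, which is at most `β²(1 - c)²/γ · y_n²` by completing
the square in `f (y_{n-1})`.
-/

theorem sq_le_sq_mul_sq_of_abs_le_mul_abs {q a u : ℝ} (h : |q| ≤ a * |u|) :
    q ^ 2 ≤ a ^ 2 * u ^ 2 := by
  have h2 := pow_le_pow_left₀ (abs_nonneg q) h 2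
  rwa [sq_abs, mul_pow, sq_abs] at h2

theorem two_mul_mul_sub_mul_sq_le {γ : ℝ} (hγ : 0 < γ) (b u p : ℝ) :
    2 * b * u * p - γ * p ^ 2 ≤ b ^ 2 / γ * u ^ 2 := by
  rw [div_mul_eq_mul_div, le_div_iff₀ hγ]
  nlinarith [sq_nonneg (γ * p - b * u)]

theorem lyapunov_sub_le {β γ c a u p q : ℝ} (hγ : 0 < γ) (hq : q ^ 2 ≤ a ^ 2 * u ^ 2) :
    (β * (c * u - p) ^ 2 + γ * q ^ 2) - (β * (u - p) ^ 2 + γ * p ^ 2) ≤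
      (γ * a ^ 2 + β ^ 2 / γ * (1 - c) ^ 2 - β * (1 - c ^ 2)) * u ^ 2 := by
  have hcross := two_mul_mul_sub_mul_sq_le hγ (β * (1 - c)) u p
  have hnew : γ * q ^ 2 ≤ γ * (a ^ 2 * u ^ 2) := mul_le_mul_of_nonneg_left hq hγ.le
  linear_combination hcross + hnew

theorem stmt4_general (c a : ℝ)
    (f : ℝ → ℝ) (hfb : ∀ t : ℝ, |f t| ≤ a * |t|)
    (β γ : ℝ) (hγ : 0 < γ) (y : ℕ → ℝ)
    (hy : ∀ n : ℕ, 2 ≤ n → y (n + 1) = c * y n + f (y n) - f (y (n - 1)))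
    (V : ℕ → ℝ)
    (hV : ∀ n : ℕ, V n = β * (y n - f (y (n - 1))) ^ 2 + γ * (f (y (n - 1))) ^ 2) :
    ∀ n : ℕ, 2 ≤ n →
      V (n + 1) - V n ≤
        -(-γ * a ^ 2 - β ^ 2 / γ * (1 - c) ^ 2 + β * (1 - c ^ 2)) * y n ^ 2 := by
  intro n hn
  have hstep : y (n + 1) - f (y n) = c * y n - f (y (n - 1)) := by rw [hy n hn]; ring
  rw [hV, hV, Nat.add_sub_cancel, hstep]
  calc _ ≤ _ := lyapunov_sub_le hγ (sq_le_sq_mul_sq_of_abs_le_mul_abs (hfb (y n)))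
    _ = _ := by ring

theorem stmt4 (c a : ℝ) (hc0 : 0 ≤ c) (hc1 : c < 1) (ha0 : 0 ≤ a)
    (f : ℝ → ℝ) (hfb : ∀ t : ℝ, |f t| ≤ a * |t|)
    (β γ : ℝ) (hβ : 0 < β) (hγ : 0 < γ) (y : ℕ → ℝ)
    (hy : ∀ n : ℕ, 2 ≤ n → y (n + 1) = c * y n + f (y n) - f (y (n - 1)))
    (V : ℕ → ℝ)
    (hV : ∀ n : ℕ, V n = β * (y n - f (y (n - 1))) ^ 2 + γ * (f (y (n - 1))) ^ 2) :
    ∀ n : ℕ, 2 ≤ n →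
      V (n + 1) - V n ≤
        -(-γ * a ^ 2 - β ^ 2 / γ * (1 - c) ^ 2 + β * (1 - c ^ 2)) * y n ^ 2 :=
  stmt4_general c a f hfb β γ hγ y hy V hV
end

section
/- Let c ∈ [0,1), a > 0 with a < (1+c)/2, and f : ℝ → ℝ continuous with |f(t)| ≤ a|t| for all t ∈ ℝ. Then every solution (x_n) of x_{n+1} = c·x_n + f(x_n − x_{n−1}) (n ≥ 1) converges to 0. -/
theorem stmt6 (c a : ℝ) (hc0 : 0 ≤ c) (hc1 : c < 1) (ha0 : 0 < a)
    (ha : a < (1 + c) / 2) (f : ℝ → ℝ) (hf : Continuous f)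
    (hfb : ∀ t : ℝ, |f t| ≤ a * |t|) (x : ℕ → ℝ)
    (hx : ∀ n : ℕ, 1 ≤ n → x (n + 1) = c * x n + f (x n - x (n - 1))) :
    Filter.Tendsto x Filter.atTop (nhds 0) := by
  have h2a : 0 < 1 + c - 2 * a := by linarith
  set φ : ℝ := 1 - a - a ^ 2 + a * c with hφdef
  have hφ : 0 < φ := by nlinarith [sq_nonneg (1 - a), mul_pos ha0 h2a]
  set W : ℕ → ℝ := fun n => (1 - c) * (x (n + 1)) ^ 2 + a * (x (n + 1) - x n) ^ 2 with hWdef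
  have key : ∀ n : ℕ,
      a * (1 - c) ^ 2 * (1 + c - 2 * a) * (x (n + 1)) ^ 2 ≤ φ * a * (W n - W (n + 1)) := by
    intro n
    have hrec : x (n + 2) = c * x (n + 1) + f (x (n + 1) - x n) := by
      have := hx (n + 1) (by omega)
      simpa using this
    set X := x (n + 1) with hX
    set R := x (n + 1) - x n with hR
    set S := f R with hS
    have hSb : S ^ 2 ≤ a ^ 2 * R ^ 2 := by
      have h1 : |S| ≤ a * |R| := hfb R
      nlinarith [abs_nonneg S, abs_nonneg R, sq_abs S, sq_abs R]
    have hid : φ * a * (W n - W (n + 1)) =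
        (φ * S - a * (1 - c) * (c - a) * X) ^ 2
        + a * (1 - c) ^ 2 * (1 + c - 2 * a) * X ^ 2
        + φ * (a ^ 2 * R ^ 2 - S ^ 2) := by
      have hW1 : W (n + 1) = (1 - c) * (c * X + S) ^ 2 + a * ((c * X + S) - X) ^ 2 := by
        simp only [hWdef]
        rw [show n + 1 + 1 = n + 2 from rfl, hrec]
      have hW0 : W n = (1 - c) * X ^ 2 + a * R ^ 2 := rfl
      rw [hW0, hW1, hφdef]
      ring
    nlinarith [sq_nonneg (φ * S - a * (1 - c) * (c - a) * X),
      mul_nonneg hφ.le (by linarith : (0:ℝ) ≤ a ^ 2 * R ^ 2 - S ^ 2)]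
  have hc1' : 0 < 1 - c := by linarith
  have hWnonneg : ∀ n, 0 ≤ W n := by
    intro n
    have := sq_nonneg (x (n + 1))
    have := sq_nonneg (x (n + 1) - x n)
    simp only [hWdef]
    positivity
  have hmono : ∀ n, W (n + 1) ≤ W n := by
    intro n
    have hk := key n
    have hpos : 0 < φ * a := mul_pos hφ ha0
    have h1 : 0 ≤ φ * a * (W n - W (n + 1)) := le_trans (by positivity) hk
    by_contra hcon
    push_neg at hcon
    nlinarith [mul_pos hpos (sub_pos.mpr hcon)]
  have hant : Antitone W := antitone_nat_of_succ_le hmono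
  have hbdd : BddBelow (Set.range W) := ⟨0, fun y ⟨n, hn⟩ => hn ▸ hWnonneg n⟩
  have hconv : Filter.Tendsto W Filter.atTop (nhds (⨅ n, W n)) :=
    tendsto_atTop_ciInf hant hbdd
  have hconv' : Filter.Tendsto (fun n => W (n + 1)) Filter.atTop (nhds (⨅ n, W n)) :=
    hconv.comp (Filter.tendsto_add_atTop_nat 1)
  have hdiff : Filter.Tendsto (fun n => W n - W (n + 1)) Filter.atTop (nhds 0) := by
    have := hconv.sub hconv'
    simpa using this
  set K : ℝ := φ / ((1 - c) ^ 2 * (1 + c - 2 * a)) with hKdef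
  have hbound : ∀ n, (x (n + 1)) ^ 2 ≤ K * (W n - W (n + 1)) := by
    intro n
    have hk := key n
    have hd : 0 < (1 - c) ^ 2 * (1 + c - 2 * a) := mul_pos (pow_pos hc1' 2) h2a
    have hk2 : (1 - c) ^ 2 * (1 + c - 2 * a) * (x (n + 1)) ^ 2 ≤ φ * (W n - W (n + 1)) :=
      le_of_mul_le_mul_left (by linarith [hk]) ha0
    rw [hKdef, div_mul_eq_mul_div, le_div_iff₀ hd]
    linarith [hk2]
  have hx2 : Filter.Tendsto (fun n => (x (n + 1)) ^ 2) Filter.atTop (nhds 0) := by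
    have hKd : Filter.Tendsto (fun n => K * (W n - W (n + 1))) Filter.atTop (nhds 0) := by
      simpa using hdiff.const_mul K
    exact squeeze_zero (fun n => sq_nonneg _) hbound hKd
  have habs : Filter.Tendsto (fun n => |x (n + 1)|) Filter.atTop (nhds 0) := by
    have hs : Filter.Tendsto (fun n => Real.sqrt ((x (n + 1)) ^ 2)) Filter.atTop (nhds (Real.sqrt 0)) :=
      (Real.continuous_sqrt.tendsto 0).comp hx2
    simpa [Real.sqrt_sq_eq_abs, Real.sqrt_zero] using hs
  have hxsucc : Filter.Tendsto (fun n => x (n + 1)) Filter.atTop (nhds 0) := by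
    exact tendsto_of_tendsto_of_tendsto_of_le_of_le (by simpa using habs.neg) habs
      (fun n => neg_abs_le (x (n + 1))) (fun n => le_abs_self (x (n + 1)))
  exact (Filter.tendsto_add_atTop_iff_nat 1).mp hxsucc
end

section
/- Let c ∈ [0,1) with (1+c)/2 ≤ a, and f(t) = −a·t. Then the characteristic polynomial λ² − (c−a)λ − a of the equation x_{n+1} = c·x_n − a(x_n − x_{n−1}) has a real root λ ≤ −1, and consequently the solution x_n = λⁿ does not converge to 0. -/
theorem stmt7 (c a : ℝ) (hc0 : 0 ≤ c) (hc1 : c < 1) (ha : (1 + c) / 2 ≤ a) :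
    ∃ lam : ℝ, lam ≤ -1 ∧ lam ^ 2 - (c - a) * lam - a = 0 ∧
      ¬ Filter.Tendsto (fun n : ℕ => lam ^ n) Filter.atTop (nhds 0) := by
  have ha0 : 0 < a := by linarith
  set D : ℝ := (c - a) ^ 2 + 4 * a with hD
  have hDpos : 0 ≤ D := by positivity
  have hsq : Real.sqrt D ^ 2 = D := Real.sq_sqrt hDpos
  have hsnn : 0 ≤ Real.sqrt D := Real.sqrt_nonneg D
  have hle : (((c - a) - Real.sqrt D) / 2 : ℝ) ≤ -1 := by
    have h2 : (c - a + 2) ^ 2 ≤ D := by nlinarith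
    have : c - a + 2 ≤ Real.sqrt D := by
      rcases le_or_gt (c - a + 2) 0 with h | h
      · linarith
      · nlinarith [hsq, hsnn]
    linarith
  refine ⟨((c - a) - Real.sqrt D) / 2, hle, by nlinarith [hsq], ?_⟩
  intro h
  have habs : (1 : ℝ) ≤ |((c - a) - Real.sqrt D) / 2| := by
    rw [abs_of_nonpos (by linarith)]; linarith
  have hone : ∀ n : ℕ, 1 ≤ |(((c - a) - Real.sqrt D) / 2) ^ n| := fun n => by
    rw [abs_pow]; exact one_le_pow₀ habs
  obtain ⟨n, hn⟩ := (h.eventually (Metric.ball_mem_nhds 0 one_pos)).exists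
  rw [Real.dist_eq, sub_zero] at hn
  exact absurd hn (not_lt.mpr (hone n))
end

section
/- Let c ∈ [0,1), a > 0, f : ℝ → ℝ continuous with 0 ≤ f(t) ≤ a|t| for all t, and let l = max{a/(a+c), a/(a+1−c)}. If a² < (1+c)/(2l), then every solution of x_{n+1} = c·x_n + f(x_n − x_{n−1}) converges to 0. -/
open Filter Topology

/-!
Write `y n = x (n + 1) - x n`, `v n = f (y n)` and `u n = y (n + 1) - f (y n) = (c - 1) x (n + 1)`.
The choice of `l` makes the cone `y (n + 1) ≤ l f (y n)`, i.e. `u n ≤ (l - 1) v n`, forward invariant.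
Once a solution is in the cone, `V = u² + γ v²` (the paper's Lyapunov function with `β = 1`) decreases
by at least `D v²` and by at least `A u² + B v²`, with `A, D > 0` for a `γ > 0` whose existence is
exactly the hypothesis `a² < (1 + c) / (2 l)`. So `V` converges, its decrements tend to `0`, then
`v → 0` and `u → 0`.
A solution that never enters the cone is strictly increasing. It cannot become positive: then the
increments would satisfy `y (n + 1) ≤ (a + c - 1) y n - (1 - c) x n ≤ y n - (1 - c) x n`
(the hypothesis forces `a + c ≤ 2`) and turn negative. So it is nonpositive, converges, and its limit
is a fixed point of `L = c L`.
-/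

def IsSolution (c : ℝ) (f : ℝ → ℝ) (x : ℕ → ℝ) : Prop :=
  ∀ n, x (n + 2) = c * x (n + 1) + f (x (n + 1) - x n)

theorem not_strictMono_of_le_linear_rec {a c : ℝ} {x : ℕ → ℝ} (hac : a + c ≤ 2) (hc : c < 1)
    (hrec : ∀ n, x (n + 2) ≤ (a + c) * x (n + 1) - a * x n) (h0 : 0 < x 0) : ¬StrictMono x := by
  intro hmono
  set δ := (1 - c) * x 0
  have hδ : 0 < δ := mul_pos (by linarith) h0
  have hdecr : ∀ n, x (n + 2) - x (n + 1) ≤ x (n + 1) - x n - δ := fun n => by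
    have hd := sub_pos.2 (hmono (Nat.lt_succ_self n))
    have hx0 : x 0 ≤ x n := hmono.monotone (Nat.zero_le n)
    nlinarith [hrec n]
  have hlin : ∀ n : ℕ, x (n + 1) - x n ≤ x 1 - x 0 - n * δ := fun n => by
    induction n with
    | zero => simp
    | succ n ih => push_cast; linarith [hdecr n]
  obtain ⟨n, hn⟩ := exists_nat_gt ((x 1 - x 0) / δ)
  have := hlin n
  have := sub_pos.2 (hmono (Nat.lt_succ_self n))
  rw [div_lt_iff₀ hδ] at hn
  linarith

theorem cone_step {c a l Y F V : ℝ} (hc0 : 0 ≤ c) (hc1 : c ≤ 1) (hl0 : 0 ≤ l) (hl1 : l ≤ 1)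
    (hla : a ≤ l * (a + c)) (hlb : a ≤ l * (a + 1 - c)) (hF : F ≤ a * |Y|) (hV : 0 ≤ V)
    (hY : Y ≤ l * V) : c * Y + F - V ≤ l * F := by
  rcases le_or_gt Y 0 with hY0 | hY0
  · rw [abs_of_nonpos hY0] at hF
    nlinarith [mul_le_mul_of_nonneg_left hF (sub_nonneg.2 hl1),
      mul_le_mul_of_nonneg_right hla (neg_nonneg.2 hY0),
      mul_nonneg (mul_nonneg hc0 (sub_nonneg.2 hl1)) (neg_nonneg.2 hY0)]
  · rw [abs_of_pos hY0] at hF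
    have hk0 : 0 ≤ c + l * (1 - c) := by nlinarith
    have hk1 : (c + l * (1 - c)) * l ≤ 1 := by nlinarith
    nlinarith [mul_le_mul_of_nonneg_left hF (sub_nonneg.2 hl1),
      mul_le_mul_of_nonneg_right hlb hY0.le, mul_le_mul_of_nonneg_left hY hk0,
      mul_le_mul_of_nonneg_right hk1 hV]

theorem lyapunov_step {c a l γ u v v' : ℝ} (hγ : 0 ≤ γ) (hA : 0 < 1 - c ^ 2 - γ * a ^ 2)
    (hC : c * (1 - c) ≤ γ * a ^ 2) (hl : l ≤ 1) (hv : 0 ≤ v) (hu : u ≤ (l - 1) * v)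
    (hv' : v' ^ 2 ≤ a ^ 2 * (u + v) ^ 2) :
    (γ * (1 - a ^ 2 * l ^ 2) - l * (1 - c) * (2 - l * (1 + c))) * v ^ 2 ≤
        u ^ 2 + γ * v ^ 2 - ((c * u + (c - 1) * v) ^ 2 + γ * v' ^ 2) ∧
      (1 - c ^ 2 - γ * a ^ 2) * u ^ 2 + (γ * (1 - a ^ 2) - (1 - c) ^ 2) * v ^ 2 ≤
        u ^ 2 + γ * v ^ 2 - ((c * u + (c - 1) * v) ^ 2 + γ * v' ^ 2) := by
  have hQ : (1 - c ^ 2 - γ * a ^ 2) * u ^ 2 + 2 * (c * (1 - c) - γ * a ^ 2) * (u * v) +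
      (γ * (1 - a ^ 2) - (1 - c) ^ 2) * v ^ 2 ≤
        u ^ 2 + γ * v ^ 2 - ((c * u + (c - 1) * v) ^ 2 + γ * v' ^ 2) := by
    nlinarith [mul_le_mul_of_nonneg_left hv' hγ]
  have hu0 : u ≤ 0 := hu.trans (mul_nonpos_of_nonpos_of_nonneg (by linarith) hv)
  constructor
  · -- the quadratic form minus its value at the cone's edge `(l - 1, 1)` is a product of two
    -- nonpositive factors
    have h1 : u - (l - 1) * v ≤ 0 := by linarith
    have h2 : (1 - c ^ 2 - γ * a ^ 2) * (u + (l - 1) * v) +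
        2 * (c * (1 - c) - γ * a ^ 2) * v ≤ 0 := by
      nlinarith [mul_nonneg (sub_nonneg.2 hl) hv]
    nlinarith [mul_nonneg_of_nonpos_of_nonpos h1 h2]
  · nlinarith [mul_nonneg (sub_nonneg.2 hC) (mul_nonneg (neg_nonneg.2 hu0) hv)]

theorem exists_lyapunov_weight {c a l : ℝ} (hc0 : 0 ≤ c) (hc1 : c < 1) (ha : a ≠ 0) (hl0 : 0 ≤ l)
    (hl1 : l ≤ 1) (hK : 2 * a ^ 2 * l < 1 + c) :
    ∃ γ, 0 < γ ∧ 0 < 1 - c ^ 2 - γ * a ^ 2 ∧ c * (1 - c) ≤ γ * a ^ 2 ∧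
      0 < γ * (1 - a ^ 2 * l ^ 2) - l * (1 - c) * (2 - l * (1 + c)) := by
  have ha2 : 0 < a ^ 2 := by positivity
  have hal : 0 < 1 - a ^ 2 * l ^ 2 := by nlinarith
  have h0 : l * (1 - c) * (2 - l * (1 + c)) / (1 - a ^ 2 * l ^ 2) < (1 - c ^ 2) / a ^ 2 := by
    rw [div_lt_div_iff₀ hal ha2]
    nlinarith [mul_pos (sub_pos.2 hc1) (sub_pos.2 hK)]
  have h2 : c * (1 - c) / a ^ 2 < (1 - c ^ 2) / a ^ 2 := by gcongr; nlinarith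
  obtain ⟨γ, hγ0, hγ1⟩ := exists_between (max_lt h0 h2)
  rw [max_lt_iff, div_lt_iff₀ hal, div_lt_iff₀ ha2] at hγ0
  rw [lt_div_iff₀ ha2] at hγ1
  refine ⟨γ, ?_, by linarith, by linarith, by linarith⟩
  nlinarith [mul_nonneg hc0 (sub_nonneg.2 hc1.le)]

theorem tendsto_zero_of_lyapunov {V u v : ℕ → ℝ} {A B D : ℝ} (hA : 0 < A) (hD : 0 < D)
    (hV : ∀ n, 0 ≤ V n) (hv : ∀ n, D * v n ^ 2 ≤ V n - V (n + 1))
    (hu : ∀ n, A * u n ^ 2 + B * v n ^ 2 ≤ V n - V (n + 1)) : Tendsto u atTop (𝓝 0) := by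
  have hanti : Antitone V :=
    antitone_nat_of_succ_le fun n => by nlinarith [hv n, mul_nonneg hD.le (sq_nonneg (v n))]
  have hΔ : Tendsto (fun n => V n - V (n + 1)) atTop (𝓝 0) := by
    have hlim := tendsto_atTop_ciInf hanti ⟨0, by rintro _ ⟨n, rfl⟩; exact hV n⟩
    simpa using hlim.sub ((tendsto_add_atTop_iff_nat 1).2 hlim)
  have hv2 : Tendsto (fun n => v n ^ 2) atTop (𝓝 0) :=
    squeeze_zero (fun n => sq_nonneg _) (fun n => (le_div_iff₀' hD).2 (hv n))
      (by simpa using hΔ.div_const D)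
  have hu2 : Tendsto (fun n => u n ^ 2) atTop (𝓝 0) :=
    squeeze_zero (fun n => sq_nonneg _)
      (fun n => (le_div_iff₀' hA).2 (le_sub_iff_add_le.2 (hu n)))
      (by simpa using (hΔ.sub (hv2.const_mul B)).div_const A)
  rw [tendsto_zero_iff_abs_tendsto_zero]
  simpa [Function.comp_def, Real.sqrt_sq_eq_abs] using (Real.continuous_sqrt.tendsto 0).comp hu2

theorem add_le_two_of_two_mul_sq_mul_lt {a c l : ℝ} (hc1 : c < 1) (hlb : a ≤ l * (a + 1 - c))
    (hK : 2 * a ^ 2 * l < 1 + c) : a + c ≤ 2 := by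
  by_contra! h
  have ha1 : 1 < a := by linarith
  have hcube : 2 * a ^ 3 < 2 * (2 * a - 1) := by
    have hpos : 0 < a + 1 - c := by linarith
    nlinarith [mul_le_mul_of_nonneg_left hlb (by positivity : (0 : ℝ) ≤ 2 * a ^ 2),
      mul_lt_mul_of_pos_right hK hpos]
  nlinarith [mul_pos (sub_pos.2 ha1) (by nlinarith : (0 : ℝ) < a ^ 2 + a - 1)]

namespace IsSolution

variable {c a l : ℝ} {f : ℝ → ℝ} {x : ℕ → ℝ}

theorem shift (hx : IsSolution c f x) (k : ℕ) : IsSolution c f (fun n => x (n + k)) := fun n => by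
  simpa only [Nat.add_right_comm _ k] using hx (n + k)

theorem eq_zero_of_tendsto (hx : IsSolution c f x) (hc : c ≠ 1) (hf : Tendsto f (𝓝 0) (𝓝 0))
    {L : ℝ} (hL : Tendsto x atTop (𝓝 L)) : L = 0 := by
  have h1 : Tendsto (fun n => x (n + 1)) atTop (𝓝 L) := (tendsto_add_atTop_iff_nat 1).2 hL
  have h2 : Tendsto (fun n => x (n + 2)) atTop (𝓝 L) := (tendsto_add_atTop_iff_nat 2).2 hL
  have hrhs : Tendsto (fun n => c * x (n + 1) + f (x (n + 1) - x n)) atTop (𝓝 (c * L + 0)) :=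
    (h1.const_mul c).add (hf.comp (by simpa using h1.sub hL))
  have hfix : (1 - c) * L = 0 := by linarith [tendsto_nhds_unique (h2.congr hx) hrhs]
  exact (mul_eq_zero.1 hfix).resolve_left (sub_ne_zero.2 hc.symm)

theorem nonpos_of_strictMono (hx : IsSolution c f x) (hfa : ∀ t, f t ≤ a * |t|)
    (hac : a + c ≤ 2) (hc : c < 1) (hmono : StrictMono x) (n : ℕ) : x n ≤ 0 := by
  by_contra! hn
  refine not_strictMono_of_le_linear_rec (x := fun k => x (k + n)) hac hc (fun k => ?_) (by simpa)
    (hmono.comp fun i j hij => by omega)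
  have hpos : 0 < x (k + 1 + n) - x (k + n) := sub_pos.2 (hmono (by omega))
  have := hfa (x (k + 1 + n) - x (k + n))
  rw [abs_of_pos hpos] at this
  linarith [hx.shift n k]

theorem tendsto_zero_of_strictMono (hx : IsSolution c f x) (hfb : ∀ t, 0 ≤ f t ∧ f t ≤ a * |t|)
    (hac : a + c ≤ 2) (hc : c < 1) (hmono : StrictMono x) : Tendsto x atTop (𝓝 0) := by
  have hnonpos := hx.nonpos_of_strictMono (fun t => (hfb t).2) hac hc hmono
  have hlim := tendsto_atTop_ciSup hmono.monotone ⟨0, by rintro _ ⟨n, rfl⟩; exact hnonpos n⟩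
  have hf : Tendsto f (𝓝 0) (𝓝 0) :=
    squeeze_zero (fun t => (hfb t).1) (fun t => (hfb t).2)
      ((by fun_prop : Continuous fun t : ℝ => a * |t|).tendsto' 0 0 (by simp))
  rwa [hx.eq_zero_of_tendsto hc.ne hf hlim] at hlim

theorem cone_invariant (hx : IsSolution c f x) (hfb : ∀ t, 0 ≤ f t ∧ f t ≤ a * |t|)
    (hc0 : 0 ≤ c) (hc1 : c ≤ 1) (hl0 : 0 ≤ l) (hl1 : l ≤ 1) (hla : a ≤ l * (a + c))
    (hlb : a ≤ l * (a + 1 - c)) (h0 : x 2 - x 1 ≤ l * f (x 1 - x 0)) (n : ℕ) :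
    x (n + 2) - x (n + 1) ≤ l * f (x (n + 1) - x n) := by
  induction n with
  | zero => exact h0
  | succ n ih =>
    have h := cone_step hc0 hc1 hl0 hl1 hla hlb (hfb _).2 (hfb _).1 ih
    have hrec : x (n + 3) = c * x (n + 2) + f (x (n + 2) - x (n + 1)) := hx (n + 1)
    linarith [hx n]

theorem tendsto_zero_of_cone (hx : IsSolution c f x) (hfb : ∀ t, 0 ≤ f t ∧ f t ≤ a * |t|)
    (hc0 : 0 ≤ c) (hc1 : c < 1) (ha : a ≠ 0) (hl0 : 0 ≤ l) (hl1 : l ≤ 1)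
    (hla : a ≤ l * (a + c)) (hlb : a ≤ l * (a + 1 - c)) (hK : 2 * a ^ 2 * l < 1 + c)
    (h0 : x 2 - x 1 ≤ l * f (x 1 - x 0)) : Tendsto x atTop (𝓝 0) := by
  have hcone := hx.cone_invariant hfb hc0 hc1.le hl0 hl1 hla hlb h0
  obtain ⟨γ, hγ, hA, hC, hD⟩ := exists_lyapunov_weight hc0 hc1 ha hl0 hl1 hK
  set v : ℕ → ℝ := fun n => f (x (n + 1) - x n)
  set u : ℕ → ℝ := fun n => (c - 1) * x (n + 1)
  have hu : ∀ n, u n = x (n + 2) - x (n + 1) - v n := fun n => by simp only [u, v, hx n]; ring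
  have hu_succ : ∀ n, u (n + 1) = c * u n + (c - 1) * v n := fun n => by
    simp only [u, v, hx n]; ring
  have hv_succ : ∀ n, v (n + 1) ^ 2 ≤ a ^ 2 * (u n + v n) ^ 2 := fun n => by
    rw [hu n, sub_add_cancel, ← sq_abs (x _ - _), ← mul_pow]
    exact pow_le_pow_left₀ (hfb _).1 (hfb _).2 2
  have hstep := fun n => lyapunov_step hγ.le hA hC hl1 (hfb _).1
    (by linarith [hcone n, hu n]) (hv_succ n)
  have hlim : Tendsto u atTop (𝓝 0) :=
    tendsto_zero_of_lyapunov (V := fun n => u n ^ 2 + γ * v n ^ 2) hA hD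
      (fun n => by positivity) (fun n => by simpa only [hu_succ] using (hstep n).1)
      (fun n => by simpa only [hu_succ] using (hstep n).2)
  rw [← tendsto_add_atTop_iff_nat 1]
  have hc : c - 1 ≠ 0 := sub_ne_zero.2 hc1.ne
  simpa [u, hc] using hlim.div_const (c - 1)

end IsSolution

theorem stmt9_general (c a : ℝ) (hc0 : 0 ≤ c) (hc1 : c < 1) (ha0 : 0 < a)
    (f : ℝ → ℝ)
    (hfb : ∀ t : ℝ, 0 ≤ f t ∧ f t ≤ a * |t|)
    (ha : a ^ 2 < (1 + c) / (2 * max (a / (a + c)) (a / (a + 1 - c))))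
    (x : ℕ → ℝ)
    (hx : ∀ n : ℕ, 1 ≤ n → x (n + 1) = c * x n + f (x n - x (n - 1))) :
    Filter.Tendsto x Filter.atTop (nhds 0) := by
  set l := max (a / (a + c)) (a / (a + 1 - c))
  have hac : 0 < a + c := by linarith
  have ha1c : 0 < a + 1 - c := by linarith
  have hla : a ≤ l * (a + c) := (div_le_iff₀ hac).1 (le_max_left _ _)
  have hlb : a ≤ l * (a + 1 - c) := (div_le_iff₀ ha1c).1 (le_max_right _ _)
  have hl0 : 0 ≤ l := (div_pos ha0 hac).le.trans (le_max_left _ _)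
  have hl1 : l ≤ 1 := max_le ((div_le_one hac).2 (by linarith)) ((div_le_one ha1c).2 (by linarith))
  have hK : 2 * a ^ 2 * l < 1 + c := by
    rw [lt_div_iff₀ (by positivity)] at ha; linarith
  have hsol : IsSolution c f (fun n => x (n + 1)) := fun n => hx (n + 2) (by omega)
  rw [← tendsto_add_atTop_iff_nat 1]
  by_cases hcone : ∃ M, x (M + 3) - x (M + 2) ≤ l * f (x (M + 2) - x (M + 1))
  · obtain ⟨M, hM⟩ := hcone
    rw [← tendsto_add_atTop_iff_nat M]
    exact (hsol.shift M).tendsto_zero_of_cone hfb hc0 hc1 ha0.ne' hl0 hl1 hla hlb hK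
      (by simpa [add_comm, add_left_comm] using hM)
  · push Not at hcone
    rw [← tendsto_add_atTop_iff_nat 1]
    refine (hsol.shift 1).tendsto_zero_of_strictMono hfb
      (add_le_two_of_two_mul_sq_mul_lt hc1 hlb hK) hc1 (strictMono_nat_of_lt_succ fun n => ?_)
    linarith [hcone n, mul_nonneg hl0 (hfb (x (n + 2) - x (n + 1))).1]

theorem stmt9 (c a : ℝ) (hc0 : 0 ≤ c) (hc1 : c < 1) (ha0 : 0 < a)
    (f : ℝ → ℝ) (hf : Continuous f)
    (hfb : ∀ t : ℝ, 0 ≤ f t ∧ f t ≤ a * |t|)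
    (ha : a ^ 2 < (1 + c) / (2 * max (a / (a + c)) (a / (a + 1 - c))))
    (x : ℕ → ℝ)
    (hx : ∀ n : ℕ, 1 ≤ n → x (n + 1) = c * x n + f (x n - x (n - 1))) :
    Filter.Tendsto x Filter.atTop (nhds 0) :=
  stmt9_general c a hc0 hc1 ha0 f hfb ha x hx
end

section
/- Let c ∈ [0,1), a ∈ (0,1], and f : ℝ → ℝ continuous with 0 ≤ f(t) ≤ a|t| for all t. If c ≥ √2 − 1, then every solution of x_{n+1} = c·x_n + f(x_n − x_{n−1}) converges to 0. -/
open Filter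

set_option maxHeartbeats 1000000

private lemma sed_key1 (c x y g1 : ℝ) (hc0 : 2/5 ≤ c) (hc1 : c ≤ 1) (hy : 0 ≤ y) (hx : 0 ≤ x)
    (hg10 : 0 ≤ g1) (hg1 : g1 ≤ |x - y|) (hdn : g1 ≤ (1-c)*x) :
    g1^2 - (1-c)*x*g1 + (x-y)*(y-c*x) ≤ ((1-c)*x - g1)*(x - c*(c*x+g1)) := by
  have hc0' : (0:ℝ) ≤ c := by linarith
  have hu : (0:ℝ) ≤ 1 - c := by linarith
  rcases abs_cases (x - y) with ⟨h1, h2⟩ | ⟨h1, h2⟩ <;> rw [h1] at hg1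
  · rcases le_or_gt g1 ((1-c)*x/2) with hg | hg
    · nlinarith [sq_nonneg (2*y - (1+c)*x),
        mul_nonneg (mul_nonneg hc0' hu) (mul_nonneg (by linarith : (0:ℝ) ≤ (1-c)*x/2 - g1) hx),
        mul_nonneg hu (mul_nonneg (by linarith : (0:ℝ) ≤ (1-c)*x/2 - g1)
          (by linarith : (0:ℝ) ≤ (1-c)*x/2 + g1)),
        mul_nonneg (by linarith : (0:ℝ) ≤ 2 + c) (sq_nonneg ((1-c)*x))]
    · nlinarith [mul_nonneg (by linarith : (0:ℝ) ≤ x - g1 - y) (by linarith : (0:ℝ) ≤ c*x + g1 - y),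
        mul_nonneg (by linarith : (0:ℝ) ≤ (1-c)*x - g1)
          (by nlinarith : (0:ℝ) ≤ (1+c)*(1-c)*x - c*g1)]
  · nlinarith [mul_nonneg hg10 (by linarith : (0:ℝ) ≤ (1-c)*x - g1),
      mul_nonneg (by linarith : (0:ℝ) ≤ y - x) (by nlinarith : (0:ℝ) ≤ y - c*x),
      mul_nonneg (by linarith : (0:ℝ) ≤ (1-c)*x - g1) (by nlinarith : (0:ℝ) ≤ (1+c)*(1-c)*x - c*g1)]

private lemma sed_key2 (c x y g1 : ℝ) (hc0 : 2/5 ≤ c) (hc1 : c ≤ 1) (hy : 0 ≤ y) (hx : 0 ≤ x)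
    (hg10 : 0 ≤ g1) (hg1 : g1 ≤ |x - y|) (hdn : g1 ≤ (1-c)*x) :
    g1^2 - (1-c)*x*g1 + (x-y)*(y-c*x) ≤ 2*(1-c)*(c*x+g1)*((1-c)*x - g1) := by
  have hc0' : (0:ℝ) ≤ c := by linarith
  have hu : (0:ℝ) ≤ 1 - c := by linarith
  rcases abs_cases (x - y) with ⟨h1, h2⟩ | ⟨h1, h2⟩ <;> rw [h1] at hg1
  · rcases le_or_gt g1 ((1-c)*x/2) with hg | hg
    · nlinarith [sq_nonneg (2*y - (1+c)*x),
        mul_nonneg (mul_nonneg hc0' hu) (mul_nonneg (by linarith : (0:ℝ) ≤ (1-c)*x/2 - g1) hx),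
        mul_nonneg hu (mul_nonneg (by linarith : (0:ℝ) ≤ (1-c)*x/2 - g1)
          (by linarith : (0:ℝ) ≤ (1-c)*x/2 + g1)),
        mul_nonneg (by linarith : (0:ℝ) ≤ (1-c)*x/2 - g1) (by linarith : (0:ℝ) ≤ (1-c)*x/2 + g1),
        mul_nonneg (mul_nonneg hu hu) (mul_nonneg hg10 hx),
        mul_nonneg hu (mul_nonneg hg10 hx), mul_nonneg hg10 hx,
        mul_nonneg hc0' (sq_nonneg ((1-c)*x)), sq_nonneg ((1-c)*x)]
    · nlinarith [mul_nonneg (by linarith : (0:ℝ) ≤ x - g1 - y) (by linarith : (0:ℝ) ≤ c*x + g1 - y),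
        mul_nonneg (mul_nonneg hu (by linarith : (0:ℝ) ≤ (1-c)*x - g1))
          (by nlinarith [mul_nonneg hc0' hx] : (0:ℝ) ≤ c*x + g1)]
  · nlinarith [mul_nonneg hg10 (by linarith : (0:ℝ) ≤ (1-c)*x - g1),
      mul_nonneg (by linarith : (0:ℝ) ≤ y - x) (by nlinarith : (0:ℝ) ≤ y - c*x),
      mul_nonneg (mul_nonneg hu (by linarith : (0:ℝ) ≤ (1-c)*x - g1))
        (by nlinarith [mul_nonneg hc0' hx] : (0:ℝ) ≤ c*x + g1)]

private lemma sed_upE (c x y g : ℝ) (hc0 : 0 ≤ c) (hc1 : c ≤ 1) (hy : 0 ≤ y) (hx : 0 ≤ x)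
    (hg0 : 0 ≤ g) (hg : g ≤ |x - y|) (hup : x ≤ c*x + g) :
    (c*x+g)^2 - (1+c)*(c*x+g)*x + x^2 ≤ x^2 - (1+c)*x*y + y^2 := by
  rcases abs_cases (x - y) with ⟨h1, h2⟩ | ⟨h1, h2⟩ <;> rw [h1] at hg
  · nlinarith [sq_nonneg (x - y), sq_nonneg (c*x + g - x), mul_nonneg hg0 (sub_nonneg.2 hg),
      mul_nonneg (sub_nonneg.2 hup) (sub_nonneg.2 hg), mul_nonneg hy hx]
  · have hA : (1-c)*x ≤ g := by linarith
    have hB : g ≤ y - x := by linarith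
    have h3 : (g - (1-c)*x) * ((y-x) - g) ≥ 0 :=
      mul_nonneg (by linarith) (by linarith)
    have h4 : (y - x) * (y - c*x) ≥ 0 :=
      mul_nonneg (by linarith) (by nlinarith)
    have h5 : (1-c)*x*(y-x) ≥ 0 := by
      have : (0:ℝ) ≤ (1-c)*x := mul_nonneg (by linarith) hx
      exact mul_nonneg this (by linarith)
    nlinarith [h3, h4, h5]

private lemma sed_downE (c x y g1 g2 : ℝ) (hc0 : 2/5 ≤ c) (hc1 : c ≤ 1) (hy : 0 ≤ y) (hx : 0 ≤ x)
    (hg10 : 0 ≤ g1) (hg1 : g1 ≤ |x - y|) (hdn : c*x + g1 ≤ x)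
    (hg20 : 0 ≤ g2) (hg2 : g2 ≤ x - (c*x + g1)) :
    (c*(c*x+g1)+g2)^2 - (1+c)*(c*(c*x+g1)+g2)*(c*x+g1) + (c*x+g1)^2
      ≤ x^2 - (1+c)*x*y + y^2 := by
  have hc0' : (0:ℝ) ≤ c := by linarith
  have hdn' : g1 ≤ (1-c)*x := by linarith
  have hk1 := sed_key1 c x y g1 hc0 hc1 hy hx hg10 hg1 hdn'
  have hk2 := sed_key2 c x y g1 hc0 hc1 hy hx hg10 hg1 hdn'
  rcases eq_or_lt_of_le (by linarith : (0:ℝ) ≤ (1-c)*x - g1) with hDz | hDp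
  · have hg2z : g2 = 0 := by linarith
    subst hg2z
    nlinarith [hk2]
  · nlinarith [mul_nonneg (mul_nonneg hg20 (by linarith : (0:ℝ) ≤ (1-c)*x - g1 - g2))
        hDp.le,
      mul_nonneg (by linarith : (0:ℝ) ≤ (1-c)*x - g1 - g2) (sub_nonneg.2 hk1),
      mul_nonneg hg20 (sub_nonneg.2 hk2), hDp]

private lemma sed_growE (c x y g : ℝ) (hc0 : 0 ≤ c) (hc1 : c ≤ 1) (hy : 0 ≤ y) (hx : 0 ≤ x)
    (hg0 : 0 ≤ g) (hg : g ≤ |x - y|) :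
    (1-c) * ((c*x+g)^2 - (1+c)*(c*x+g)*x + x^2) ≤ 28 * (x^2 - (1+c)*x*y + y^2) := by
  have hu : (0:ℝ) ≤ 1 - c := by linarith
  have h1 : c*x + g ≤ 2*x + y := by
    rcases abs_cases (x - y) with ⟨h1, _⟩ | ⟨h1, _⟩ <;> rw [h1] at hg <;> nlinarith
  have h2 : (0:ℝ) ≤ c*x + g := by positivity
  have hE1 : (c*x+g)^2 - (1+c)*(c*x+g)*x + x^2 ≤ (2*x+y)^2 + x^2 := by
    nlinarith [mul_nonneg (by linarith : (0:ℝ) ≤ 1+c) (mul_nonneg h2 hx),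
      mul_self_le_mul_self h2 h1]
  have hE1' := mul_le_mul_of_nonneg_left hE1 hu
  nlinarith [hE1', mul_nonneg (by linarith : (0:ℝ) ≤ 1+c) (sq_nonneg (x - y)),
    mul_nonneg hu (mul_nonneg hx hy), mul_nonneg hu (sq_nonneg (x - y)),
    mul_nonneg hu (sq_nonneg x), mul_nonneg hu (sq_nonneg y)]

private lemma sed_Elb (c x y : ℝ) (hc0 : 0 ≤ c) (hc1 : c ≤ 1) (hx : 0 ≤ x) (hy : 0 ≤ y) :
    (1-c)*(x^2+y^2) ≤ 2*(x^2 - (1+c)*x*y + y^2) := by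
  nlinarith [mul_nonneg (by linarith : (0:ℝ) ≤ 1+c) (sq_nonneg (x - y))]

private lemma sed_bdd (c : ℝ) (hc0 : 2/5 ≤ c) (hc1 : c < 1) (y G : ℕ → ℝ)
    (hy : ∀ k, 0 ≤ y k) (hG0 : ∀ k, 0 ≤ G k) (hG1 : ∀ k, G k ≤ |y (k+1) - y k|)
    (hstep : ∀ k, y (k+2) = c * y (k+1) + G k) :
    ∃ M : ℝ, 0 ≤ M ∧ ∀ k, y k ≤ M := by
  have hc0' : (0:ℝ) ≤ c := by linarith
  have hc1' : c ≤ 1 := hc1.le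
  have hu : (0:ℝ) < 1 - c := by linarith
  set En : ℕ → ℝ := fun k => (y (k+1))^2 - (1+c)*(y (k+1))*(y k) + (y k)^2 with hEn
  have hEnn : ∀ k, 0 ≤ En k := by
    intro k
    have := sed_Elb c (y (k+1)) (y k) hc0' hc1' (hy _) (hy _)
    have h2 : 0 ≤ (y (k+1))^2 + (y k)^2 := by positivity
    simp only [hEn]
    nlinarith [mul_nonneg hu.le h2]
  have hup : ∀ k, y (k+1) ≤ y (k+2) → En (k+1) ≤ En k := by
    intro k h
    have := sed_upE c (y (k+1)) (y k) (G k) hc0' hc1' (hy _) (hy _) (hG0 _) (hG1 _)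
      (by rw [← hstep k] ; exact h)
    simp only [hEn]
    rw [hstep k]
    exact this
  have hdn : ∀ k, y (k+2) ≤ y (k+1) → En (k+2) ≤ En k := by
    intro k h
    have hg2 : G (k+1) ≤ y (k+1) - (c * y (k+1) + G k) := by
      calc G (k+1) ≤ |y (k+2) - y (k+1)| := hG1 (k+1)
        _ = y (k+1) - y (k+2) := by rw [abs_of_nonpos (by linarith)]; ring
        _ = y (k+1) - (c * y (k+1) + G k) := by rw [hstep k]
    have := sed_downE c (y (k+1)) (y k) (G k) (G (k+1)) hc0 hc1' (hy _) (hy _)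
      (hG0 _) (hG1 _) (by rw [← hstep k]; exact h) (hG0 _) hg2
    simp only [hEn]
    rw [hstep (k+1), hstep k]
    exact this
  have hgrow : ∀ k, (1-c) * En (k+1) ≤ 28 * En k := by
    intro k
    have := sed_growE c (y (k+1)) (y k) (G k) hc0' hc1' (hy _) (hy _) (hG0 _) (hG1 _)
    simp only [hEn]
    rw [hstep k]
    exact this
  set B := max (En 0) (En 1) with hBdef
  have hB0 : 0 ≤ B := le_trans (hEnn 0) (le_max_left _ _)
  set KB := 28 * B / (1-c) with hKBdef
  have hBKB : B ≤ KB := by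
    rw [hKBdef, le_div_iff₀ hu]; nlinarith
  have main : ∀ k, En k ≤ KB ∧ (En k ≤ B ∨ En (k+1) ≤ B) := by
    intro k
    induction k with
    | zero => exact ⟨le_trans (le_max_left _ _) hBKB, Or.inl (le_max_left _ _)⟩
    | succ k ih =>
      obtain ⟨h1, h2⟩ := ih
      constructor
      · rcases h2 with h2 | h2
        · have := hgrow k
          rw [hKBdef, le_div_iff₀ hu]
          nlinarith
        · exact le_trans h2 hBKB
      · rcases le_total (y (k+2)) (y (k+1)) with hcase | hcase
        · rcases h2 with h2 | h2
          · exact Or.inr (le_trans (hdn k hcase) h2)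
          · exact Or.inl h2
        · rcases h2 with h2 | h2
          · exact Or.inl (le_trans (hup k hcase) h2)
          · exact Or.inl h2
  have hEKB : ∀ k, En k ≤ KB := fun k => (main k).1
  have hQ : ∀ k, (y k)^2 ≤ 2*KB/(1-c) := by
    intro k
    have h1 := sed_Elb c (y (k+1)) (y k) hc0' hc1' (hy _) (hy _)
    have h2 := hEKB k
    rw [le_div_iff₀ hu]
    simp only [hEn] at h2
    nlinarith [sq_nonneg (y (k+1))]
  have hKB0 : 0 ≤ KB := le_trans hB0 hBKB
  refine ⟨2*KB/(1-c) + 1, by positivity, fun k => ?_⟩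
  rcases le_total (y k) 1 with h | h
  · have : (0:ℝ) ≤ 2*KB/(1-c) := by positivity
    linarith
  · nlinarith [hQ k]



private lemma sed_tendsto (c : ℝ) (hc0 : 2/5 ≤ c) (hc1 : c < 1) (M : ℝ) (y G : ℕ → ℝ)
    (hy : ∀ k, 0 ≤ y k) (hM : ∀ k, y k ≤ M)
    (hG0 : ∀ k, 0 ≤ G k) (hG1 : ∀ k, G k ≤ |y (k+1) - y k|)
    (hstep : ∀ k, y (k+2) = c * y (k+1) + G k) :
    Tendsto y atTop (nhds 0) := by
  have hc0' : (0:ℝ) < c := by linarith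
  have hu : (0:ℝ) < 1 - c := by linarith
  set t : ℕ → ℝ := fun k => y (k+1) - y k with htdef
  have htG : ∀ k, t (k+1) = G k - (1-c) * y (k+1) := by
    intro k
    show y (k+2) - y (k+1) = G k - (1-c) * y (k+1)
    rw [hstep k]; ring
  have habs_bd : ∀ k, |t k| ≤ 2*M := by
    intro k
    have h2 : (0:ℝ) ≤ M := le_trans (hy 0) (hM 0)
    rw [abs_le]
    constructor
    · show -(2*M) ≤ y (k+1) - y k
      have := hy (k+1); have := hM k; linarith
    · show y (k+1) - y k ≤ 2*M
      have := hM (k+1); have := hy k; linarith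
  have hby_up : IsBoundedUnder (· ≤ ·) atTop y := isBoundedUnder_of ⟨M, hM⟩
  have hby_lo : IsBoundedUnder (· ≥ ·) atTop y := isBoundedUnder_of ⟨0, hy⟩
  have hby_cob : IsCoboundedUnder (· ≤ ·) atTop y := hby_lo.isCoboundedUnder_le
  have habs_up : IsBoundedUnder (· ≤ ·) atTop (fun k => |t k|) :=
    isBoundedUnder_of ⟨2*M, habs_bd⟩
  have habs_lo : IsBoundedUnder (· ≥ ·) atTop (fun k => |t k|) :=
    isBoundedUnder_of ⟨0, fun k => abs_nonneg _⟩
  have habs_cob : IsCoboundedUnder (· ≤ ·) atTop (fun k => |t k|) :=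
    habs_lo.isCoboundedUnder_le
  set μ := limsup y atTop with hμdef
  set L := limsup (fun k => |t k|) atTop with hLdef
  have hL0 : 0 ≤ L :=
    le_limsup_of_frequently_le (Frequently.of_forall (fun k => abs_nonneg _)) habs_up
  have hμ0 : 0 ≤ μ :=
    le_limsup_of_frequently_le (Frequently.of_forall hy) hby_up
  have hkey : ∀ ε : ℝ, 0 < ε → (1-c)*μ ≤ L + 2*ε := by
    intro ε hε
    have h1 : ∀ᶠ k in atTop, |t k| < L + ε :=
      eventually_lt_of_limsup_lt (by linarith) habs_up
    have h2 : ∀ᶠ k in atTop, y k < μ + ε :=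
      eventually_lt_of_limsup_lt (by linarith) hby_up
    obtain ⟨N1, hN1⟩ := eventually_atTop.mp h1
    obtain ⟨N2, hN2⟩ := eventually_atTop.mp h2
    have hev : ∀ᶠ m in atTop, y m ≤ c*(μ+ε) + (L+ε) := by
      rw [eventually_atTop]
      refine ⟨N1 + N2 + 2, fun m hm => ?_⟩
      obtain ⟨i, rfl⟩ : ∃ i, m = i + 2 := ⟨m - 2, by omega⟩
      rw [hstep i]
      have hGi : G i ≤ |t i| := hG1 i
      have hb1 := hN1 i (by omega)
      have hb2 := hN2 (i+1) (by omega)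
      have := mul_le_mul_of_nonneg_left hb2.le hc0'.le
      linarith
    have hls : μ ≤ c*(μ+ε) + (L+ε) := limsup_le_of_le hby_cob hev
    nlinarith
  have hμL : (1-c)*μ ≤ L := by
    by_contra hcon
    push_neg at hcon
    have := hkey (((1-c)*μ - L)/3) (by linarith)
    linarith
  rcases le_or_gt L 0 with hL | hL
  · have hμ2 : μ ≤ 0 := by nlinarith
    refine tendsto_of_le_liminf_of_limsup_le ?_ hμ2 hby_up hby_lo
    exact le_liminf_of_le hby_up.isCoboundedUnder_ge (Eventually.of_forall hy)
  · exfalso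
    obtain ⟨ε, hεdef, hε⟩ : ∃ ε : ℝ, 100*ε = L*c*(1-c)^2 ∧ 0 < ε :=
      ⟨L*c*(1-c)^2/100, by ring, by positivity⟩
    obtain ⟨F, hFdef, hF1⟩ : ∃ F : ℝ, (1-c)*F = 4 - c ∧ 1 ≤ F := by
      refine ⟨(4-c)/(1-c), by field_simp, ?_⟩
      rw [le_div_iff₀ hu]; linarith
    -- helper multiplied identities
    have e2 : (1-c)*F*ε = (4-c)*ε := by rw [hFdef]
    have e3 : (1-c)*F*((1-c)*ε) = (4-c)*((1-c)*ε) := by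
      rw [hFdef]
    have e4 : (1-c)*F*(c*ε) = (4-c)*(c*ε) := by rw [hFdef]
    have e5 : (1-c)*F*((1-c)*(c*ε)) = (4-c)*((1-c)*(c*ε)) := by rw [hFdef]
    have h1 : ∀ᶠ k in atTop, |t k| < L + ε :=
      eventually_lt_of_limsup_lt (by linarith) habs_up
    have h2 : ∀ᶠ k in atTop, y k < μ + ε :=
      eventually_lt_of_limsup_lt (by linarith) hby_up
    obtain ⟨N, hN⟩ := eventually_atTop.mp (h1.and h2)
    have stepA : ∀ j, N ≤ j → t (j+2) < L - F*ε := by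
      intro j hj
      by_contra hcon
      push_neg at hcon
      have ht2 : t (j+2) = G (j+1) - (1-c) * y (j+2) := htG (j+1)
      have hGj1 : G (j+1) ≤ |t (j+1)| := hG1 (j+1)
      have habsj1 : |t (j+1)| < L + ε := (hN (j+1) (by omega)).1
      have hyj20 := hy (j+2)
      have hyj2 : (1-c) * y (j+2) ≤ (1+F)*ε := by linarith
      have htj1 : L - F*ε ≤ |t (j+1)| := by
        nlinarith [mul_nonneg hu.le (hy (j+2))]
      rcases le_abs.mp htj1 with hpos | hneg
      · have ht1 : t (j+1) ≤ y (j+2) := by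
          show y (j+2) - y (j+1) ≤ y (j+2)
          have := hy (j+1); linarith
        have m1 : (1-c)*(L - F*ε) ≤ (1+F)*ε := by
          have := mul_le_mul_of_nonneg_left (le_trans hpos ht1) hu.le
          linarith
        have m2 : (1-c)*((1-c)*(L - F*ε)) ≤ (1-c)*((1+F)*ε) :=
          mul_le_mul_of_nonneg_left m1 hu.le
        -- (1-c)^2 L ≤ (1-c)ε + (4-c)ε + (1-c)(4-c)ε ≤ 9ε ; 100ε = c(1-c)^2 L ≤ (1-c)^2 L
        have h4 : c*((1-c)^2*L) ≤ 1*((1-c)^2*L) :=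
          mul_le_mul_of_nonneg_right (by linarith) (mul_nonneg (sq_nonneg _) hL0)
        have m4 : (1-c)^2*L ≤ (9 - 7*c + c^2)*ε := by linarith [m2, e2, e3]
        have m5 : (0:ℝ) < (91 + 7*c - c^2)*ε := mul_pos (by nlinarith) hε
        linarith [m4, h4, hεdef, m5]
      · have hyj1 : L - F*ε ≤ y (j+1) := by
          have h5 : -(t (j+1)) ≤ y (j+1) := by
            show -(y (j+2) - y (j+1)) ≤ y (j+1)
            have := hy (j+2); linarith
          linarith
        have hyj2' : c * y (j+1) ≤ y (j+2) := by
          have := hstep j; have := hG0 j; linarith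
        have m1 : (1-c)*(c*(L - F*ε)) ≤ (1+F)*ε := by
          have ha := mul_le_mul_of_nonneg_left hyj1 hc0'.le
          have hb := mul_le_mul_of_nonneg_left (le_trans ha hyj2') hu.le
          linarith
        have m2 : (1-c)*((1-c)*(c*(L - F*ε))) ≤ (1-c)*((1+F)*ε) :=
          mul_le_mul_of_nonneg_left m1 hu.le
        have m4 : c*(1-c)^2*L ≤ (5 + 2*c - 5*c^2 + c^3)*ε := by linarith [m2, e2, e5]
        have m5 : (0:ℝ) < (95 - 2*c + 5*c^2 - c^3)*ε := mul_pos (by nlinarith) hε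
        linarith [m4, hεdef, m5]
    -- obtain a large negative t at some k = j+4
    have hfreq : ∃ᶠ k in atTop, L - ε < |t k| :=
      frequently_lt_of_lt_limsup habs_cob (by linarith)
    obtain ⟨k, hkN, hkt⟩ := (hfreq.and_eventually (eventually_ge_atTop (N+4))).exists
    obtain ⟨j, rfl⟩ : ∃ j, k = j + 4 := ⟨k - 4, by omega⟩
    have hjN : N ≤ j := by omega
    have hA4 : t (j+4) < L - F*ε := stepA (j+2) (by omega)
    have hneg : t (j+4) < -(L - ε) := by
      rcases lt_abs.mp hkN with h | h
      · exfalso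
        have : F*ε ≥ 1*ε := mul_le_mul_of_nonneg_right hF1 hε.le
        linarith
      · linarith
    -- (i) : L - ε < (1-c) * y (j+4)
    have hi : L - ε < (1-c) * y (j+4) := by
      have := htG (j+3)
      have := hG0 (j+3)
      linarith
    have hstepj : y (j+4) = c * y (j+3) + G (j+2) := hstep (j+2)
    have hyj3 : y (j+3) < μ + ε := (hN (j+3) (by omega)).2
    have hyj2b : y (j+2) < μ + ε := (hN (j+2) (by omega)).2
    have habsj2 : |t (j+2)| < L + ε := (hN (j+2) (by omega)).1
    have hGj2 : G (j+2) ≤ |t (j+2)| := hG1 (j+2)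
    have hA2 : t (j+2) < L - F*ε := stepA j hjN
    have hcμ : c*((1-c)*μ) ≤ c*L := mul_le_mul_of_nonneg_left hμL hc0'.le
    rcases le_abs.mp hGj2 with hcase | hcase
    · -- G (j+2) ≤ t (j+2) < L - F ε
      have m1 : y (j+4) < c*(μ+ε) + (L - F*ε) := by
        have := mul_le_mul_of_nonneg_left hyj3.le hc0'.le
        linarith
      have m2 : (1-c)*(y (j+4)) < (1-c)*(c*(μ+ε) + (L - F*ε)) :=
        mul_lt_mul_of_pos_left m1 hu
      have m5 : (0:ℝ) < (3 - 2*c + c^2)*ε := mul_pos (by nlinarith [sq_nonneg (c-1)]) hε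
      linarith [m2, hcμ, e2, m5, hi]
    · -- G (j+2) ≤ - t (j+2)
      have hyj3' : y (j+3) ≤ y (j+2) - G (j+2) := by
        have : t (j+2) = y (j+3) - y (j+2) := rfl
        linarith
      have m1 : y (j+4) ≤ c*(μ+ε) + (1-c)*(L+ε) := by
        have ha : y (j+4) ≤ c*(y (j+2) - G (j+2)) + G (j+2) := by
          have := mul_le_mul_of_nonneg_left hyj3' hc0'.le
          linarith
        have hb : c*(y (j+2) - G (j+2)) + G (j+2) = c*(y (j+2)) + (1-c)*(G (j+2)) := by ring
        have hc' : (1-c)*(G (j+2)) ≤ (1-c)*(L+ε) :=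
          mul_le_mul_of_nonneg_left (by linarith) hu.le
        have hd : c*(y (j+2)) ≤ c*(μ+ε) := mul_le_mul_of_nonneg_left hyj2b.le hc0'.le
        linarith
      have m2 : L - ε < (1-c)*(c*(μ+ε) + (1-c)*(L+ε)) :=
        lt_of_lt_of_le hi (mul_le_mul_of_nonneg_left m1 hu.le)
      have m4 : L*c*(1-c) < (2-c)*ε := by linarith [m2, hcμ]
      have e6 : (2-c)*(100*ε) = (2-c)*(L*c*(1-c)^2) := by rw [hεdef]
      have hf : (0:ℝ) ≤ (1-c)*(98 + 3*c - c^2) := mul_nonneg hu.le (by nlinarith)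
      have m6 : (0:ℝ) ≤ (L*c)*((1-c)*(98 + 3*c - c^2)) :=
        mul_nonneg (mul_nonneg hL0 hc0'.le) hf
      linarith [m4, e6, m6]

theorem stmt10 (c a : ℝ) (hc0 : 0 ≤ c) (hc1 : c < 1) (ha0 : 0 < a) (ha1 : a ≤ 1)
    (f : ℝ → ℝ) (hf : Continuous f)
    (hfb : ∀ t : ℝ, 0 ≤ f t ∧ f t ≤ a * |t|)
    (hc : Real.sqrt 2 - 1 ≤ c) (x : ℕ → ℝ)
    (hx : ∀ n : ℕ, 1 ≤ n → x (n + 1) = c * x n + f (x n - x (n - 1))) :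
    Filter.Tendsto x Filter.atTop (nhds 0) := by
  have hsqrt : (1.4:ℝ) ≤ Real.sqrt 2 := by
    nlinarith [Real.sq_sqrt (by norm_num : (0:ℝ) ≤ 2), Real.sqrt_nonneg 2]
  have hc25 : 2/5 ≤ c := by linarith
  by_cases hneg : ∀ n : ℕ, 1 ≤ n → x n < 0
  · -- all terms negative : geometric decay
    have hdecay : ∀ n : ℕ, |x (n+1)| ≤ |x 1| * c^n := by
      intro n
      induction n with
      | zero => simp
      | succ n ih =>
        have hrec := hx (n+1) (by omega)
        simp only [Nat.add_sub_cancel] at hrec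
        have hf1 := (hfb (x (n+1) - x n)).1
        have h2 : x (n+1+1) < 0 := hneg (n+2) (by omega)
        have h3 : x (n+1) < 0 := hneg (n+1) (by omega)
        have h4 : c * x (n+1) ≤ x (n+1+1) := by rw [hrec]; linarith
        have h5 : |x (n+1+1)| ≤ c * |x (n+1)| := by
          rw [abs_of_neg h2, abs_of_neg h3]; linarith
        calc |x (n+1+1)| ≤ c * |x (n+1)| := h5
          _ ≤ c * (|x 1| * c^n) := by
              exact mul_le_mul_of_nonneg_left ih hc0
          _ = |x 1| * c^(n+1) := by ring
    have hgeo : Filter.Tendsto (fun n : ℕ => |x 1| * c^n) Filter.atTop (nhds 0) := by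
      have := (tendsto_pow_atTop_nhds_zero_of_lt_one hc0 hc1).const_mul (|x 1|)
      simpa using this
    have h6 : Filter.Tendsto (fun n : ℕ => x (n+1)) Filter.atTop (nhds 0) := by
      apply squeeze_zero_norm _ hgeo
      intro n
      simpa [Real.norm_eq_abs] using hdecay n
    exact (Filter.tendsto_add_atTop_iff_nat 1).mp h6
  · -- eventually nonnegative
    push_neg at hneg
    obtain ⟨N, hN1, hN0⟩ := hneg
    set y : ℕ → ℝ := fun k => x (N + k) with hydef
    have hrec : ∀ k : ℕ, y (k+2) = c * y (k+1) + f (y (k+1) - y k) := by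
      intro k
      have h := hx (N + k + 1) (by omega)
      simp only [Nat.add_sub_cancel] at h
      have e1 : N + (k + 2) = N + k + 1 + 1 := by omega
      have e2 : N + (k + 1) = N + k + 1 := by omega
      show x (N + (k+2)) = c * x (N + (k+1)) + f (x (N + (k+1)) - x (N + k))
      rw [e1, e2]
      exact h
    have hy0 : ∀ k, 0 ≤ y k := by
      intro k
      induction k with
      | zero => simpa [hydef] using hN0
      | succ k ih =>
        have := hx (N + k) (by omega)
        have hfn := (hfb (x (N + k) - x (N + k - 1))).1
        show 0 ≤ x (N + (k+1))
        have he : N + (k+1) = (N + k) + 1 := by omega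
        rw [he, this]
        have : 0 ≤ c * x (N + k) := mul_nonneg hc0 ih
        linarith
    set G : ℕ → ℝ := fun k => f (y (k+1) - y k) with hGdef
    have hG0 : ∀ k, 0 ≤ G k := fun k => (hfb _).1
    have hG1 : ∀ k, G k ≤ |y (k+1) - y k| := by
      intro k
      have h1 := (hfb (y (k+1) - y k)).2
      have h2 : a * |y (k+1) - y k| ≤ 1 * |y (k+1) - y k| :=
        mul_le_mul_of_nonneg_right ha1 (abs_nonneg _)
      simpa using le_trans h1 h2
    have hstep : ∀ k, y (k+2) = c * y (k+1) + G k := hrec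
    obtain ⟨M, hM0, hM⟩ := sed_bdd c hc25 hc1 y G hy0 hG0 hG1 hstep
    have hyt : Filter.Tendsto y Filter.atTop (nhds 0) :=
      sed_tendsto c hc25 hc1 M y G hy0 hM hG0 hG1 hstep
    have : Filter.Tendsto (fun k : ℕ => x (k + N)) Filter.atTop (nhds 0) := by
      apply hyt.congr
      intro k
      simp [hydef, Nat.add_comm]
    exact (Filter.tendsto_add_atTop_iff_nat N).mp this
end

section
/- Let c ∈ [0,1) and f : ℝ → ℝ continuously differentiable at 0 with 0 < f(t)/t ≤ f'(0) < 1 for all t ≠ 0. Then every solution of x_{n+1} = c·x_n + f(x_n − x_{n−1}) oscillates if and only if f'(0) > (1−√(1−c))². -/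
open Filter Topology



private lemma div_step (u v w q : ℝ) (hu : 0 < u) (hv : 0 < v)
    (h : w * u ≤ v * v - q * (u * v)) : w / v ≤ v / u - q := by
  rw [div_le_iff₀ hv]
  have he : (v/u - q) * v = (v*v - q*(u*v))/u := by field_simp
  rw [he, le_div_iff₀ hu]
  exact h

set_option maxHeartbeats 1000000 in
lemma oscPos (a b c : ℝ) (hc0 : 0 ≤ c) (hc1 : c < 1) (ha : 0 < a)
    (hb : 0 < b) (hDa : (c+a)^2 < 4*a) (hDb : (c+b)^2 < 4*b)
    (F : ℝ → ℝ)
    (hFpos : ∀ t : ℝ, 0 < t → F t ≤ a*t)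
    (hFnp : ∀ t : ℝ, t ≤ 0 → F t ≤ 0)
    (δ : ℝ) (hδ : 0 < δ)
    (hFδ : ∀ t : ℝ, -δ < t → t < 0 → F t ≤ b*t)
    (x : ℕ → ℝ)
    (hx : ∀ n : ℕ, 1 ≤ n → x (n + 1) = c * x n + F (x n - x (n - 1)))
    (N : ℕ) (hN : ∀ n : ℕ, N ≤ n → 0 < x n) : False := by
  have hrec : ∀ k : ℕ, x (k+2) = c * x (k+1) + F (x (k+1) - x k) := by
    intro k
    have h := hx (k+1) (by omega)
    simpa using h
  by_cases hmono : ∃ m, N ≤ m ∧ x (m+1) ≤ x m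
  · -- eventually decreasing case
    obtain ⟨m, hm, hxm⟩ := hmono
    have hdec : ∀ n, m ≤ n → x (n+2) ≤ c * x (n+1) ∧ x (n+2) < x (n+1) := by
      intro n hn
      induction n, hn using Nat.le_induction with
      | base =>
          have h := hrec m
          have hF : F (x (m+1) - x m) ≤ 0 := hFnp _ (by linarith)
          have hxp : 0 < x (m+1) := hN _ (by omega)
          exact ⟨by rw [h]; linarith, by rw [h]; nlinarith⟩
      | succ n hn ih =>
          have h := hrec (n+1)
          have hF : F (x (n+2) - x (n+1)) ≤ 0 := hFnp _ (by linarith [ih.2])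
          have hxp : 0 < x (n+2) := hN _ (by omega)
          have e : n+1+2 = n+3 := by omega
          have e2 : n+1+1 = n+2 := by omega
          rw [e, e2] at h
          exact ⟨by rw [show n+1+2 = n+3 from e, show n+1+1 = n+2 from e2, h]; linarith,
                 by rw [show n+1+2 = n+3 from e, show n+1+1 = n+2 from e2, h]; nlinarith⟩
    have hstep : ∀ n, m+1 ≤ n → x (n+1) ≤ c * x n ∧ x (n+1) < x n := by
      intro n hn
      obtain ⟨k, rfl⟩ := Nat.exists_eq_add_of_le hn
      have h := hdec (m+k) (by omega)
      have e : m+k+2 = m+1+k+1 := by omega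
      have e2 : m+k+1 = m+1+k := by omega
      rw [e, e2] at h
      exact h
    have hanti : ∀ p q : ℕ, m+1 ≤ p → p ≤ q → x q ≤ x p := by
      intro p q hp hq
      induction q, hq using Nat.le_induction with
      | base => exact le_refl _
      | succ q hq ih => exact le_trans (le_of_lt (hstep q (le_trans hp hq)).2) ih
    have hgeo : ∀ k : ℕ, x (m+1+k) ≤ c^k * x (m+1) := by
      intro k
      induction k with
      | zero => simp
      | succ k ih =>
          have h := (hstep (m+1+k) (by omega)).1
          calc x (m+1+(k+1)) = x (m+1+k+1) := by ring_nf
            _ ≤ c * x (m+1+k) := h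
            _ ≤ c * (c^k * x (m+1)) := mul_le_mul_of_nonneg_left ih hc0
            _ = c^(k+1) * x (m+1) := by ring
    have hlim : Tendsto (fun k : ℕ => c^k * x (m+1)) atTop (𝓝 0) := by
      have := tendsto_pow_atTop_nhds_zero_of_lt_one hc0 hc1
      simpa using this.mul_const (x (m+1))
    obtain ⟨K, hK⟩ : ∃ K : ℕ, c^K * x (m+1) < δ :=
      (hlim.eventually (eventually_lt_nhds hδ)).exists
    have hxsmall : ∀ n, m+1+K ≤ n → x n < δ := by
      intro n hn
      calc x n ≤ x (m+1+K) := hanti (m+1+K) n (by omega) hn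
        _ ≤ c^K * x (m+1) := hgeo K
        _ < δ := hK
    obtain ⟨d1, hd1⟩ : ∃ d1 : ℝ, d1 = b - (c+b)^2/4 := ⟨_, rfl⟩
    have hd1pos : 0 < d1 := by rw [hd1]; nlinarith
    have hkey : ∀ n, m+1+K ≤ n → x (n+2) / x (n+1) ≤ x (n+1) / x n - d1 := by
      intro n hn
      have hu : 0 < x n := hN n (by omega)
      have hv : 0 < x (n+1) := hN (n+1) (by omega)
      have htneg : x (n+1) - x n < 0 := by linarith [(hstep n (by omega)).2]
      have htb : -δ < x (n+1) - x n := by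
        have := hxsmall n hn
        linarith
      have hFt : F (x (n+1) - x n) ≤ b * (x (n+1) - x n) := hFδ _ htb htneg
      have h1 : x (n+2) ≤ (c+b) * x (n+1) - b * x n := by
        have h := hrec n
        nlinarith [hFt]
      have hvc : x (n+1) ≤ c * x n := (hstep n (by omega)).1
      apply div_step _ _ _ _ hu hv
      have h1u : x (n+2) * x n ≤ ((c+b) * x (n+1) - b * x n) * x n :=
        mul_le_mul_of_nonneg_right h1 hu.le
      have hq : (0:ℝ) < b - (c+b)^2/4 := by nlinarith
      have huv : 0 < x n * (x n - x (n+1)) := by nlinarith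
      rw [hd1]
      nlinarith [sq_nonneg (x (n+1) - (c+b)/2 * x n), mul_nonneg hq.le huv.le]
    have hdesc : ∀ k : ℕ, x (m+1+K+k+1) / x (m+1+K+k) ≤ c - k * d1 := by
      intro k
      induction k with
      | zero =>
          simp only [Nat.add_zero, Nat.cast_zero, zero_mul, sub_zero]
          have hu : 0 < x (m+1+K) := hN _ (by omega)
          exact (div_le_iff₀ hu).mpr (by linarith [(hstep (m+1+K) (by omega)).1])
      | succ k ih =>
          have h := hkey (m+1+K+k) (by omega)
          have e : m+1+K+k+1+1 = m+1+K+(k+1)+1 := by omega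
          have e2 : m+1+K+k+2 = m+1+K+(k+1)+1 := by omega
          have e3 : m+1+K+k+1 = m+1+K+(k+1) := by omega
          rw [e2, e3] at h
          rw [e3] at ih
          push_cast
          push_cast at ih
          linarith
    obtain ⟨k, hk⟩ := exists_nat_gt (c / d1)
    have h1 := hdesc k
    have h2 : 0 < x (m+1+K+k+1) / x (m+1+K+k) :=
      div_pos (hN _ (by omega)) (hN _ (by omega))
    have : c < k * d1 := by
      rw [div_lt_iff₀ hd1pos] at hk
      linarith
    linarith
  · -- increasing case
    push_neg at hmono
    have hinc : ∀ n, N ≤ n → x n < x (n+1) := fun n hn => hmono n hn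
    have hub : ∀ n, N ≤ n → x (n+2) ≤ (c+a) * x (n+1) - a * x n := by
      intro n hn
      have ht : 0 < x (n+1) - x n := by linarith [hinc n hn]
      have h2 := hFpos _ ht
      have h := hrec n
      rw [h]; linarith
    have hle : ∀ n, N+1 ≤ n → x (n+1) ≤ (c+a) * x n := by
      intro n hn
      obtain ⟨k, rfl⟩ : ∃ k, n = k + 1 := ⟨n - 1, by omega⟩
      have h := hub k (by omega)
      have hu : 0 < x k := hN k (by omega)
      have e : k+1+1 = k+2 := by omega
      rw [e]
      nlinarith
    have hca : 0 < c + a := by linarith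
    obtain ⟨d2, hd2⟩ : ∃ d2 : ℝ, d2 = (a - (c+a)^2/4)/(c+a) := ⟨_, rfl⟩
    have hd2pos : 0 < d2 := by
      rw [hd2]
      exact div_pos (by nlinarith) hca
    have hdd : d2 * (c+a) = a - (c+a)^2/4 := by
      rw [hd2]; field_simp
    have hrgt : ∀ n, N ≤ n → 1 < x (n+1) / x n := by
      intro n hn
      have hu : 0 < x n := hN n hn
      rw [lt_div_iff₀ hu]
      simpa using hinc n hn
    have hkey : ∀ n, N+1 ≤ n → x (n+2) / x (n+1) ≤ x (n+1) / x n - d2 := by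
      intro n hn
      have hu : 0 < x n := hN n (by omega)
      have hv : 0 < x (n+1) := hN (n+1) (by omega)
      have h1 := hub n (by omega)
      have hvc : x (n+1) ≤ (c+a) * x n := hle n hn
      have hvu : x n < x (n+1) := hinc n (by omega)
      apply div_step _ _ _ _ hu hv
      have h1u : x (n+2) * x n ≤ ((c+a) * x (n+1) - a * x n) * x n :=
        mul_le_mul_of_nonneg_right h1 hu.le
      have h3 : d2 * (x n * x (n+1)) ≤ (a - (c+a)^2/4) * (x n * x n) := by
        have h4 : d2 * (x n * x (n+1)) ≤ d2 * ((c+a) * (x n * x n)) :=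
          mul_le_mul_of_nonneg_left (by nlinarith) hd2pos.le
        calc d2 * (x n * x (n+1)) ≤ d2 * ((c+a) * (x n * x n)) := h4
          _ = (d2 * (c+a)) * (x n * x n) := by ring
          _ = (a - (c+a)^2/4) * (x n * x n) := by rw [hdd]
      nlinarith [sq_nonneg (x (n+1) - (c+a)/2 * x n), h3]
    have hdesc : ∀ k : ℕ, x (N+1+k+1) / x (N+1+k) ≤ (c+a) - k * d2 := by
      intro k
      induction k with
      | zero =>
          simp only [Nat.add_zero, Nat.cast_zero, zero_mul, sub_zero]
          have hv : 0 < x (N+1) := hN (N+1) (by omega)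
          exact (div_le_iff₀ hv).mpr (hle (N+1) (by omega))
      | succ k ih =>
          have h := hkey (N+1+k) (by omega)
          have e2 : N+1+k+2 = N+1+(k+1)+1 := by omega
          have e3 : N+1+k+1 = N+1+(k+1) := by omega
          rw [e2, e3] at h
          rw [e3] at ih
          push_cast
          push_cast at ih
          linarith
    obtain ⟨k, hk⟩ := exists_nat_gt ((c+a-1) / d2)
    have h1 := hdesc k
    have h2 := hrgt (N+1+k) (by omega)
    have : c+a-1 < k * d2 := by
      rw [div_lt_iff₀ hd2pos] at hk
      linarith
    linarith


lemma thresh_mp (c a : ℝ) (hc0 : 0 ≤ c) (hc1 : c < 1) (ha0 : 0 < a) (ha1 : a < 1)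
    (h : (1 - Real.sqrt (1-c))^2 < a) : (c+a)^2 < 4*a := by
  set s := Real.sqrt (1-c) with hsdef
  set u := Real.sqrt a with hudef
  have hs2 : s^2 = 1-c := Real.sq_sqrt (by linarith)
  have hs0 : 0 < s := Real.sqrt_pos.mpr (by linarith)
  have hs1 : s ≤ 1 := by
    nlinarith [Real.sqrt_nonneg (1-c)]
  have hu2 : u^2 = a := Real.sq_sqrt ha0.le
  have hu0 : 0 < u := Real.sqrt_pos.mpr ha0
  have hu1 : u < 1 := by nlinarith
  have h1su : 1 - s < u := by
    by_contra h'
    push_neg at h'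
    nlinarith
  have h2u : c + a < 2*u := by
    nlinarith [mul_pos (show (0:ℝ) < u+s-1 by linarith) (show (0:ℝ) < 1-u+s by linarith)]
  nlinarith

lemma thresh_mpr (c a : ℝ) (hc0 : 0 ≤ c) (hc1 : c < 1) (ha0 : 0 < a) (ha1 : a < 1)
    (h : a ≤ (1 - Real.sqrt (1-c))^2) : 4*a ≤ (c+a)^2 ∧ c + a < 2 := by
  set s := Real.sqrt (1-c) with hsdef
  set u := Real.sqrt a with hudef
  have hs2 : s^2 = 1-c := Real.sq_sqrt (by linarith)
  have hs0 : 0 < s := Real.sqrt_pos.mpr (by linarith)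
  have hs1 : s ≤ 1 := by
    nlinarith [Real.sqrt_nonneg (1-c)]
  have hu2 : u^2 = a := Real.sq_sqrt ha0.le
  have hu0 : 0 < u := Real.sqrt_pos.mpr ha0
  have hs1' : s < 1 := by
    rcases lt_or_eq_of_le hs1 with h' | h'
    · exact h'
    · exfalso; rw [h'] at h; simp at h; linarith
  have hus : u ≤ 1 - s := by
    by_contra h'
    push_neg at h'
    nlinarith
  have hfac : (0:ℝ) ≤ (1-u-s) * (1-u+s) :=
    mul_nonneg (by linarith) (by linarith)
  have h2u : 2*u ≤ c + a := by nlinarith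
  have hca : (0:ℝ) ≤ c + a := by nlinarith
  constructor
  · nlinarith [mul_nonneg hca (show (0:ℝ) ≤ c+a-2*u by linarith)]
  · nlinarith

noncomputable def seqP (c : ℝ) (f : ℝ → ℝ) (x0 x1 : ℝ) : ℕ → ℝ × ℝ := fun n =>
  Nat.rec (x0, x1) (fun _ p => (p.2, c * p.2 + f (p.2 - p.1))) n

noncomputable def seqX (c : ℝ) (f : ℝ → ℝ) (x0 x1 : ℝ) : ℕ → ℝ := fun n =>
  (seqP c f x0 x1 n).1

lemma seqX_zero (c : ℝ) (f : ℝ → ℝ) (x0 x1 : ℝ) : seqX c f x0 x1 0 = x0 := rfl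

lemma seqX_one (c : ℝ) (f : ℝ → ℝ) (x0 x1 : ℝ) : seqX c f x0 x1 1 = x1 := rfl

lemma seqX_succ (c : ℝ) (f : ℝ → ℝ) (x0 x1 : ℝ) (n : ℕ) :
    seqX c f x0 x1 (n+2) = c * seqX c f x0 x1 (n+1) +
      f (seqX c f x0 x1 (n+1) - seqX c f x0 x1 n) := by
  have h1 : ∀ m : ℕ, (seqP c f x0 x1 (m+1)).1 = (seqP c f x0 x1 m).2 := fun m => rfl
  have h2 : (seqP c f x0 x1 (n+1)).2
      = c * (seqP c f x0 x1 n).2 + f ((seqP c f x0 x1 n).2 - (seqP c f x0 x1 n).1) := rfl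
  show (seqP c f x0 x1 (n+2)).1 = _
  rw [h1 (n+1), h2, ← h1 n]
  rfl

lemma nonosc (c a : ℝ) (hc0 : 0 ≤ c) (hc1 : c < 1) (ha0 : 0 < a)
    (hD : 4*a ≤ (c+a)^2) (hsum : c + a < 2)
    (f : ℝ → ℝ) (hf0 : f 0 = 0)
    (hup : ∀ t : ℝ, t < 0 → a*t ≤ f t ∧ f t < 0) :
    ∃ x : ℕ → ℝ, (∀ n : ℕ, 1 ≤ n → x (n + 1) = c * x n + f (x n - x (n - 1))) ∧
      ∀ n : ℕ, 0 < x n := by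
  have hca : 0 < c + a := by linarith
  set e := Real.sqrt ((c+a)^2 - 4*a) with hedef
  have he2 : e^2 = (c+a)^2 - 4*a := Real.sq_sqrt (by linarith)
  have he0 : 0 ≤ e := Real.sqrt_nonneg _
  have helt : e < c + a := by nlinarith
  obtain ⟨lam, hlam⟩ : ∃ lam : ℝ, lam = ((c+a) - e)/2 := ⟨_, rfl⟩
  have hlam0 : 0 < lam := by rw [hlam]; linarith
  have hlam1 : lam < 1 := by rw [hlam]; linarith
  have hroot : lam^2 = (c+a)*lam - a := by
    rw [hlam]; linear_combination he2 / 4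
  refine ⟨seqX c f 1 lam, ?_, ?_⟩
  · intro n hn
    obtain ⟨k, rfl⟩ : ∃ k, n = k + 1 := ⟨n - 1, by omega⟩
    have := seqX_succ c f 1 lam k
    simpa using this
  · set x := seqX c f 1 lam with hx
    have hQ : ∀ n : ℕ, 0 < x n ∧ 0 < x (n+1) ∧ lam * x n ≤ x (n+1) ∧ x (n+1) < x n := by
      intro n
      induction n with
      | zero =>
          refine ⟨?_, ?_, ?_, ?_⟩ <;>
            simp only [hx, show (0:ℕ)+1 = 1 from rfl, seqX_zero, seqX_one] <;> linarith
      | succ n ih =>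
          obtain ⟨h0, h1, h2, h3⟩ := ih
          have ht : x (n+1) - x n < 0 := by linarith
          obtain ⟨hft1, hft2⟩ := hup _ ht
          have hrec : x (n+2) = c * x (n+1) + f (x (n+1) - x n) := seqX_succ c f 1 lam n
          have hupper : x (n+2) < x (n+1) := by
            rw [hrec]; nlinarith
          have hlower : lam * x (n+1) ≤ x (n+2) := by
            have ha1 : a * (lam * x n) ≤ a * x (n+1) := mul_le_mul_of_nonneg_left h2 ha0.le
            have h6 : lam * (a*(x (n+1) - x n)) ≤ lam * f (x (n+1) - x n) :=
              mul_le_mul_of_nonneg_left hft1 hlam0.le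
            have h5 : lam * x (n+2) = lam * c * x (n+1) + lam * f (x (n+1) - x n) := by
              rw [hrec]; ring
            have h7 : lam * (lam * x (n+1)) ≤ lam * x (n+2) := by nlinarith
            exact le_of_mul_le_mul_left h7 hlam0
          exact ⟨h1, by nlinarith, hlower, hupper⟩
    exact fun n => (hQ n).1
theorem stmt16 (c : ℝ) (hc0 : 0 ≤ c) (hc1 : c < 1) (f : ℝ → ℝ) (hf : Continuous f)
    (hdiff : DifferentiableAt ℝ f 0)
    (hfrac : ∀ t : ℝ, t ≠ 0 → 0 < f t / t ∧ f t / t ≤ deriv f 0)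
    (hd1 : deriv f 0 < 1) :
    (∀ x : ℕ → ℝ, (∀ n : ℕ, 1 ≤ n → x (n + 1) = c * x n + f (x n - x (n - 1))) →
        ¬ (∃ N : ℕ, ∀ n : ℕ, N ≤ n → 0 < x n) ∧
        ¬ (∃ N : ℕ, ∀ n : ℕ, N ≤ n → x n < 0)) ↔
      (1 - Real.sqrt (1 - c)) ^ 2 < deriv f 0 := by
  obtain ⟨a, hadef⟩ : ∃ a : ℝ, a = deriv f 0 := ⟨_, rfl⟩
  rw [← hadef] at hfrac hd1 ⊢
  have ha0 : 0 < a := by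
    have h := hfrac 1 one_ne_zero
    calc (0:ℝ) < f 1 / 1 := h.1
      _ ≤ a := h.2
  have ha1 : a < 1 := hd1
  have hpos : ∀ t : ℝ, 0 < t → 0 < f t ∧ f t ≤ a * t := by
    intro t ht
    have h := hfrac t (ne_of_gt ht)
    constructor
    · rcases div_pos_iff.mp h.1 with ⟨h1, _⟩ | ⟨_, h2⟩
      · exact h1
      · linarith
    · exact (div_le_iff₀ ht).mp h.2
  have hneg : ∀ t : ℝ, t < 0 → a * t ≤ f t ∧ f t < 0 := by
    intro t ht
    have h := hfrac t (ne_of_lt ht)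
    constructor
    · exact (div_le_iff_of_neg ht).mp h.2
    · rcases div_pos_iff.mp h.1 with ⟨_, h2⟩ | ⟨h1, _⟩
      · linarith
      · exact h1
  have hf0 : f 0 = 0 := by
    have h1 : Tendsto f (𝓝[>] (0:ℝ)) (𝓝 (f 0)) := (hf.tendsto 0).mono_left nhdsWithin_le_nhds
    have h2 : Tendsto f (𝓝[>] (0:ℝ)) (𝓝 0) := by
      have hg : Tendsto (fun _ : ℝ => (0:ℝ)) (𝓝[>] (0:ℝ)) (𝓝 0) := tendsto_const_nhds
      have hh : Tendsto (fun t : ℝ => a * t) (𝓝[>] (0:ℝ)) (𝓝 0) := by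
        have h3 : Tendsto (fun t : ℝ => a * t) (𝓝 (0:ℝ)) (𝓝 (a * 0)) :=
          (continuous_const.mul continuous_id).tendsto 0
        rw [mul_zero] at h3
        exact Tendsto.mono_left h3 nhdsWithin_le_nhds
      refine tendsto_of_tendsto_of_tendsto_of_le_of_le' hg hh ?_ ?_
      · filter_upwards [self_mem_nhdsWithin] with t ht
        exact (hpos t ht).1.le
      · filter_upwards [self_mem_nhdsWithin] with t ht
        exact (hpos t ht).2
    exact tendsto_nhds_unique h1 h2
  constructor
  · intro hall
    by_contra hr
    push_neg at hr
    obtain ⟨hD, hsum⟩ := thresh_mpr c a hc0 hc1 ha0 ha1 hr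
    obtain ⟨x, hxrec, hxpos⟩ := nonosc c a hc0 hc1 ha0 hD hsum f hf0 hneg
    exact (hall x hxrec).1 ⟨0, fun n _ => hxpos n⟩
  · intro hth x hxrec
    have hDa : (c+a)^2 < 4*a := thresh_mp c a hc0 hc1 ha0 ha1 hth
    obtain ⟨eps, heps0, heps1, heps2⟩ :
        ∃ eps : ℝ, 0 < eps ∧ eps ≤ a/2 ∧ eps ≤ (4*a-(c+a)^2)/6 :=
      ⟨min (a/2) ((4*a-(c+a)^2)/6), lt_min (by linarith) (by linarith),
        min_le_left _ _, min_le_right _ _⟩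
    obtain ⟨b, hbdef⟩ : ∃ b : ℝ, b = a - eps := ⟨_, rfl⟩
    have hb0 : 0 < b := by rw [hbdef]; linarith
    have hDb : (c+b)^2 < 4*b := by
      rw [hbdef]
      nlinarith [mul_pos heps0 (show (0:ℝ) < 2+2*(c+a)-eps by linarith)]
    have hslope : Tendsto (fun t : ℝ => f t / t) (𝓝[≠] (0:ℝ)) (𝓝 a) := by
      have h := hasDerivAt_iff_tendsto_slope.mp hdiff.hasDerivAt
      rw [← hadef] at h
      have he : (fun t : ℝ => f t / t) = slope f 0 := by
        funext t; simp [slope_def_field, hf0]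
      rw [he]; exact h
    have hev : ∀ᶠ t in 𝓝[≠] (0:ℝ), b < f t / t :=
      hslope.eventually (eventually_gt_nhds (by rw [hbdef]; linarith))
    rw [eventually_nhdsWithin_iff] at hev
    obtain ⟨δ, hδ0, hδ⟩ := Metric.eventually_nhds_iff.mp hev
    constructor
    · rintro ⟨N, hN⟩
      refine oscPos a b c hc0 hc1 ha0 hb0 hDa hDb f
        (fun t ht => (hpos t ht).2) ?_ δ hδ0 ?_ x hxrec N hN
      · intro t ht
        rcases lt_or_eq_of_le ht with h' | h'
        · exact (hneg t h').2.le
        · simp [h', hf0]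
      · intro t h1 h2
        have hne : t ∈ ({0}ᶜ : Set ℝ) := by simp [ne_of_lt h2]
        have hdist : dist t 0 < δ := by
          rw [Real.dist_eq, sub_zero, abs_of_neg h2]; linarith
        have h3 := hδ hdist hne
        have h4 := (lt_div_iff_of_neg h2).mp h3
        linarith
    · rintro ⟨N, hN⟩
      obtain ⟨G, hGdef⟩ : ∃ G : ℝ → ℝ, G = fun s => -f (-s) := ⟨_, rfl⟩
      obtain ⟨y, hydef⟩ : ∃ y : ℕ → ℝ, y = fun n => -x n := ⟨_, rfl⟩
      have hyrec : ∀ n : ℕ, 1 ≤ n → y (n+1) = c * y n + G (y n - y (n-1)) := by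
        intro n hn
        rw [hydef, hGdef]
        simp only
        have e : -(-x n - -x (n-1)) = x n - x (n-1) := by ring
        rw [e, hxrec n hn]
        ring
      refine oscPos a b c hc0 hc1 ha0 hb0 hDa hDb G ?_ ?_ δ hδ0 ?_ y hyrec N
        (fun n hn => by rw [hydef]; simp only; linarith [hN n hn])
      · intro t ht
        rw [hGdef]; simp only
        have h := (hneg (-t) (by linarith)).1
        linarith
      · intro t ht
        rw [hGdef]; simp only
        rcases lt_or_eq_of_le ht with h' | h'
        · have h := (hpos (-t) (by linarith)).1
          linarith
        · simp [h', hf0]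
      · intro t h1 h2
        rw [hGdef]; simp only
        have hne : (-t) ∈ ({0}ᶜ : Set ℝ) := by simp; intro h; linarith
        have hdist : dist (-t) 0 < δ := by
          rw [Real.dist_eq, sub_zero, abs_of_pos (by linarith : (0:ℝ) < -t)]; linarith
        have h3 := hδ hdist hne
        have h4 := (lt_div_iff₀ (by linarith : (0:ℝ) < -t)).mp h3
        linarith
end

section
/- Let c ∈ [0,1) and a ∈ (0,1), and consider the discrete neuron model x_{n+1} = c·x_n + a·tanh(x_n − x_{n−1}). Every solution oscillates if and only if a > (1−√(1−c))². -/
/-!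
Both directions compare an orbit with the linear recurrence `y (n + 2) = (c + b) y (n + 1) - b y n`,
whose positive solutions exist exactly when `4 b ≤ (c + b) ^ 2`: otherwise the ratios
`y (n + 1) / y n` drop by at least `2 √b - (c + b) > 0` at every step.

If `4 a ≤ (c + a) ^ 2`, then since `t ≤ tanh t` for `t ≤ 0`, a decreasing orbit stays above the
linear recurrence with `b = a`, and a real characteristic root yields a positive orbit.
If `(c + a) ^ 2 < 4 a`, a positive orbit is either eventually increasing, and then `tanh t ≤ t`
puts it below the linear recurrence with `b = a`; or it decreases from some point on, hence
geometrically to `0`, so its increments become small and `tanh t ≤ θ t` with `θ < 1` close to `1`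
puts it below the linear recurrence with `b = a θ`. Negative orbits are the negatives of
positive ones, and `(1 - √(1 - c)) ^ 2 < a` is a rewriting of `(c + a) ^ 2 < 4 a`.
-/

open Real Filter Topology

namespace Real

theorem hasDerivAt_tanh (x : ℝ) : HasDerivAt tanh (1 - tanh x ^ 2) x := by
  rw [show tanh = fun y => sinh y / cosh y from funext tanh_eq_sinh_div_cosh]
  refine ((hasDerivAt_sinh x).div (hasDerivAt_cosh x) (cosh_pos x).ne').congr_deriv ?_
  field_simp

theorem tanh_nonpos {x : ℝ} (hx : x ≤ 0) : tanh x ≤ 0 := by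
  rw [tanh_eq_sinh_div_cosh]
  exact div_nonpos_of_nonpos_of_nonneg (sinh_nonpos_iff.2 hx) (cosh_pos x).le

theorem tanh_sub_tanh_le {x y : ℝ} (hxy : x ≤ y) : tanh y - tanh x ≤ y - x := by
  simpa using image_sub_le_mul_sub_of_deriv_le (C := 1)
    (fun z => (hasDerivAt_tanh z).differentiableAt)
    (fun z => (hasDerivAt_tanh z).deriv.trans_le (by nlinarith [sq_nonneg (tanh z)])) hxy

theorem tanh_le_self {x : ℝ} (hx : 0 ≤ x) : tanh x ≤ x := by
  simpa using tanh_sub_tanh_le hx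

theorem self_le_tanh {x : ℝ} (hx : x ≤ 0) : x ≤ tanh x := by
  simpa using tanh_sub_tanh_le hx

theorem eventually_tanh_le_mul {θ : ℝ} (hθ : θ < 1) : ∀ᶠ u in 𝓝 0, u ≤ 0 → tanh u ≤ θ * u := by
  have hslope : Tendsto (fun u => tanh u / u) (𝓝[≠] 0) (𝓝 1) := by
    simpa [slope_fun_def_field, tanh_zero] using (hasDerivAt_tanh 0).tendsto_slope
  filter_upwards [eventually_nhdsWithin_iff.1 (hslope.eventually (lt_mem_nhds hθ))] with u hu hu0
  rcases hu0.lt_or_eq with hneg | rfl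
  · have := hu hneg.ne
    rw [lt_div_iff_of_neg hneg] at this
    exact this.le
  · simp

end Real

theorem not_forall_pos_of_sq_lt {p q : ℝ} (hpq : p ^ 2 < 4 * q) {y : ℕ → ℝ}
    (hrec : ∀ n, y (n + 2) ≤ p * y (n + 1) - q * y n) : ¬ ∀ n, 0 < y n := by
  intro hpos
  have hq : 0 ≤ q := by nlinarith [sq_nonneg p]
  set δ := 2 * √q - p
  have hδ : 0 < δ := by nlinarith [sq_sqrt hq, sqrt_nonneg q]
  set r := fun n => y (n + 1) / y n
  have hr : ∀ n, 0 < r n := fun n => div_pos (hpos _) (hpos _)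
  -- AM-GM `r + q / r ≥ 2 √q` turns the recurrence `r (n + 1) ≤ p - q / r n` into a uniform drop.
  have hstep : ∀ n, r (n + 1) ≤ r n - δ := by
    intro n
    have hrec' : r (n + 1) ≤ p - q / r n := by
      simp only [r]
      rw [div_le_iff₀ (hpos _), div_div_eq_mul_div, sub_mul, div_mul_cancel₀ _ (hpos _).ne']
      exact hrec n
    have hamgm : 2 * √q ≤ r n + q / r n := by
      have := div_mul_cancel₀ q (hr n).ne'
      nlinarith [sq_nonneg (r n - √q), sq_sqrt hq, hr n]
    linarith
  have hdrift : ∀ n : ℕ, r n ≤ r 0 - n * δ := by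
    intro n
    induction n with
    | zero => simp
    | succ k ih => push_cast; linarith [hstep k]
  obtain ⟨n, hn⟩ := exists_nat_gt (r 0 / δ)
  have := hr n
  have := hdrift n
  rw [div_lt_iff₀ hδ] at hn
  linarith

theorem not_eventually_pos_of_sq_lt {p q : ℝ} (hpq : p ^ 2 < 4 * q) {y : ℕ → ℝ}
    (hrec : ∀ᶠ n in atTop, y (n + 2) ≤ p * y (n + 1) - q * y n) : ¬ ∀ᶠ n in atTop, 0 < y n := by
  intro hpos
  obtain ⟨N, hN⟩ := eventually_atTop.1 (hrec.and hpos)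
  exact not_forall_pos_of_sq_lt hpq (y := fun n => y (N + n))
    (fun n => (hN (N + n) le_self_add).1) (fun n => (hN (N + n) le_self_add).2)

theorem tendsto_zero_of_le_mul {c : ℝ} (hc : c < 1) {x : ℕ → ℝ} (hpos : ∀ᶠ n in atTop, 0 < x n)
    (hle : ∀ᶠ n in atTop, x (n + 1) ≤ c * x n) : Tendsto x atTop (𝓝 0) := by
  refine (summable_of_ratio_norm_eventually_le hc ?_).tendsto_atTop_zero
  filter_upwards [hle, hpos, (tendsto_add_atTop_nat 1).eventually hpos] with n hn h0 h1
  rwa [norm_of_nonneg h0.le, norm_of_nonneg h1.le]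

def IsNeuronOrbit (c a : ℝ) (x : ℕ → ℝ) : Prop :=
  ∀ n, x (n + 2) = c * x (n + 1) + a * tanh (x (n + 1) - x n)

theorem isNeuronOrbit_iff {c a : ℝ} {x : ℕ → ℝ} :
    IsNeuronOrbit c a x ↔ ∀ n, 1 ≤ n → x (n + 1) = c * x n + a * tanh (x n - x (n - 1)) := by
  refine ⟨fun hx n hn => ?_, fun hx n => hx (n + 1) le_add_self⟩
  obtain ⟨k, rfl⟩ := Nat.exists_eq_add_of_le' hn
  exact hx k

namespace IsNeuronOrbit

variable {c a : ℝ} {x : ℕ → ℝ}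

theorem neg (hx : IsNeuronOrbit c a x) : IsNeuronOrbit c a (-x) := by
  intro n
  simp only [Pi.neg_apply, hx n, ← neg_sub', tanh_neg]
  ring

theorem le_mul_of_le (hx : IsNeuronOrbit c a x) (ha : 0 ≤ a) {n : ℕ} (h : x (n + 1) ≤ x n) :
    x (n + 2) ≤ c * x (n + 1) := by
  rw [hx n]
  nlinarith [tanh_nonpos (sub_nonpos.2 h)]

theorem succ_le_of_le_of_pos (hx : IsNeuronOrbit c a x) (hc : c ≤ 1) (ha : 0 ≤ a) {m : ℕ}
    (hpos : ∀ n ≥ m, 0 < x n) (hm : x (m + 1) ≤ x m) : ∀ n ≥ m, x (n + 1) ≤ x n := by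
  intro n hn
  induction n, hn using Nat.le_induction with
  | base => exact hm
  | succ n hn ih => nlinarith [hx.le_mul_of_le ha ih, hpos (n + 1) (by omega)]

theorem not_eventually_pos_of_tanh_le (hx : IsNeuronOrbit c a x) {b : ℝ} (hb : (c + b) ^ 2 < 4 * b)
    (htanh : ∀ᶠ n in atTop, a * tanh (x (n + 1) - x n) ≤ b * (x (n + 1) - x n)) :
    ¬ ∀ᶠ n in atTop, 0 < x n :=
  not_eventually_pos_of_sq_lt hb (htanh.mono fun n hn => by rw [hx n]; linarith)

theorem not_forall_ge_pos_of_le (hx : IsNeuronOrbit c a x) (hc : c < 1) (ha : 0 < a)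
    (h : (c + a) ^ 2 < 4 * a) {m : ℕ} (hm : x (m + 1) ≤ x m) : ¬ ∀ n ≥ m, 0 < x n := by
  intro hpos
  have hdec : ∀ᶠ n in atTop, x (n + 1) ≤ x n :=
    eventually_atTop.2 ⟨m, hx.succ_le_of_le_of_pos hc.le ha.le hpos hm⟩
  have hpos' : ∀ᶠ n in atTop, 0 < x n := eventually_atTop.2 ⟨m, hpos⟩
  have hzero : Tendsto x atTop (𝓝 0) := by
    rw [← tendsto_add_atTop_iff_nat 1]
    exact tendsto_zero_of_le_mul hc ((tendsto_add_atTop_nat 1).eventually hpos')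
      (hdec.mono fun n => hx.le_mul_of_le ha.le)
  have hdiff : Tendsto (fun n => x (n + 1) - x n) atTop (𝓝 0) := by
    simpa using ((tendsto_add_atTop_iff_nat 1).2 hzero).sub hzero
  -- `(c + b) ^ 2 < 4 * b` is an open condition on `b`, so it survives replacing `a` by `a * θ`.
  obtain ⟨θ, hθ, hθdisc⟩ : ∃ θ < 1, (c + a * θ) ^ 2 < 4 * (a * θ) := by
    have hcont : Tendsto (fun θ => 4 * (a * θ) - (c + a * θ) ^ 2) (𝓝[<] 1)
        (𝓝 (4 * a - (c + a) ^ 2)) := by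
      refine Tendsto.mono_left ?_ nhdsWithin_le_nhds
      simpa using (by fun_prop : Continuous fun θ : ℝ => 4 * (a * θ) - (c + a * θ) ^ 2).tendsto 1
    obtain ⟨θ, hθpos, hθ⟩ :=
      ((hcont.eventually (lt_mem_nhds (sub_pos.2 h))).and self_mem_nhdsWithin).exists
    exact ⟨θ, hθ, sub_pos.1 hθpos⟩
  refine hx.not_eventually_pos_of_tanh_le hθdisc ?_ hpos'
  filter_upwards [hdiff.eventually (eventually_tanh_le_mul hθ), hdec] with n hn hn'
  rw [mul_assoc]
  exact mul_le_mul_of_nonneg_left (hn (sub_nonpos.2 hn')) ha.le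

theorem not_eventually_pos (hx : IsNeuronOrbit c a x) (hc : c < 1) (ha : 0 < a)
    (h : (c + a) ^ 2 < 4 * a) : ¬ ∀ᶠ n in atTop, 0 < x n := by
  intro hpos
  by_cases hmono : ∀ᶠ n in atTop, x n ≤ x (n + 1)
  · refine hx.not_eventually_pos_of_tanh_le h ?_ hpos
    exact hmono.mono fun n hn => mul_le_mul_of_nonneg_left (tanh_le_self (sub_nonneg.2 hn)) ha.le
  · obtain ⟨N, hN⟩ := eventually_atTop.1 hpos
    obtain ⟨m, hNm, hm⟩ := frequently_atTop.1 (not_eventually.1 hmono) N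
    exact hx.not_forall_ge_pos_of_le hc ha h (not_le.1 hm).le fun n hn => hN n (hNm.trans hn)

theorem pos_of_root (hx : IsNeuronOrbit c a x) (hc : c ≤ 1) (ha : 0 ≤ a) {l : ℝ} (hl : 0 < l)
    (hla : l * (c + a - l) = a) (h0 : 0 < x 0) (h1 : l * x 0 ≤ x 1) (h10 : x 1 ≤ x 0) :
    ∀ n, 0 < x n := by
  have hl' : 0 ≤ c + a - l := nonneg_of_mul_nonneg_right (by rwa [hla]) hl
  -- While `x` decreases, `t ≤ tanh t` bounds the orbit below by the linear recurrence with
  -- characteristic root `l`, which preserves `l * x n ≤ x (n + 1)`.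
  have key : ∀ n, 0 < x n ∧ l * x n ≤ x (n + 1) ∧ x (n + 1) ≤ x n := by
    intro n
    induction n with
    | zero => exact ⟨h0, h1, h10⟩
    | succ n ih =>
      obtain ⟨hpos, hlow, hup⟩ := ih
      have hpos' : 0 < x (n + 1) := lt_of_lt_of_le (mul_pos hl hpos) hlow
      have hΔ : x (n + 1) - x n ≤ 0 := sub_nonpos.2 hup
      refine ⟨hpos', ?_, by nlinarith [hx.le_mul_of_le ha hup]⟩
      rw [hx n]
      nlinarith [mul_le_mul_of_nonneg_left (self_le_tanh hΔ) ha,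
        mul_le_mul_of_nonneg_left hlow hl']
  exact fun n => (key n).1

end IsNeuronOrbit

noncomputable def neuronSeq (c a x₀ x₁ : ℝ) : ℕ → ℝ
  | 0 => x₀
  | 1 => x₁
  | n + 2 => c * neuronSeq c a x₀ x₁ (n + 1) +
      a * tanh (neuronSeq c a x₀ x₁ (n + 1) - neuronSeq c a x₀ x₁ n)

theorem isNeuronOrbit_neuronSeq (c a x₀ x₁ : ℝ) : IsNeuronOrbit c a (neuronSeq c a x₀ x₁) :=
  fun n => by rw [neuronSeq]

theorem exists_isNeuronOrbit_pos {c a : ℝ} (hc0 : 0 ≤ c) (hc : c ≤ 1) (ha0 : 0 < a)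
    (ha1 : a ≤ 1) (h : 4 * a ≤ (c + a) ^ 2) : ∃ x, IsNeuronOrbit c a x ∧ ∀ n, 0 < x n := by
  set s := √((c + a) ^ 2 - 4 * a)
  have hs : s ^ 2 = (c + a) ^ 2 - 4 * a := sq_sqrt (sub_nonneg.2 h)
  have hs1 : s ≤ 2 - (c + a) := by
    rw [sqrt_le_left (by nlinarith)]
    nlinarith
  refine ⟨neuronSeq c a 1 1, isNeuronOrbit_neuronSeq c a 1 1, ?_⟩
  refine (isNeuronOrbit_neuronSeq c a 1 1).pos_of_root hc ha0.le (l := (c + a + s) / 2)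
    (by positivity) (by linear_combination (-1 / 4 : ℝ) * hs) one_pos ?_ le_rfl
  simp only [neuronSeq, mul_one]
  linarith

theorem one_sub_sqrt_one_sub_sq_lt_iff {c a : ℝ} (hc0 : 0 ≤ c) (hc : c ≤ 1) (ha0 : 0 ≤ a)
    (ha1 : a ≤ 1) : (1 - √(1 - c)) ^ 2 < a ↔ (c + a) ^ 2 < 4 * a := by
  set s := √(1 - c)
  set t := √a
  have hs : s ^ 2 = 1 - c := sq_sqrt (by linarith)
  have ht : t ^ 2 = a := sq_sqrt ha0
  have hs0 : 0 ≤ s := sqrt_nonneg _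
  have ht0 : 0 ≤ t := sqrt_nonneg _
  have hs1 : s ≤ 1 := sqrt_le_one.2 (by linarith)
  have ht1 : t ≤ 1 := sqrt_le_one.2 ha1
  calc (1 - s) ^ 2 < a ↔ 1 - s < t := by rw [← ht, sq_lt_sq₀ (by linarith) ht0]
    _ ↔ (1 - t) ^ 2 < s ^ 2 := by
      rw [sq_lt_sq₀ (by linarith) hs0]; constructor <;> intro <;> linarith
    _ ↔ c + a < 2 * t := by rw [hs, ← ht]; constructor <;> intro <;> nlinarith
    _ ↔ (c + a) ^ 2 < 4 * a := by
      rw [← ht, show 4 * t ^ 2 = (2 * t) ^ 2 by ring, sq_lt_sq₀ (by positivity) (by positivity)]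

theorem stmt17 (c a : ℝ) (hc0 : 0 ≤ c) (hc1 : c < 1) (ha0 : 0 < a) (ha1 : a < 1) :
    (∀ x : ℕ → ℝ,
        (∀ n : ℕ, 1 ≤ n → x (n + 1) = c * x n + a * Real.tanh (x n - x (n - 1))) →
        ¬ (∃ N : ℕ, ∀ n : ℕ, N ≤ n → 0 < x n) ∧
        ¬ (∃ N : ℕ, ∀ n : ℕ, N ≤ n → x n < 0)) ↔
      (1 - Real.sqrt (1 - c)) ^ 2 < a := by
  rw [one_sub_sqrt_one_sub_sq_lt_iff hc0 hc1.le ha0.le ha1.le]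
  constructor
  · intro H
    by_contra! hge
    obtain ⟨x, hx, hpos⟩ := exists_isNeuronOrbit_pos hc0 hc1.le ha0 ha1.le hge
    exact (H x (isNeuronOrbit_iff.1 hx)).1 ⟨0, fun n _ => hpos n⟩
  · intro h x hx
    replace hx := isNeuronOrbit_iff.2 hx
    refine ⟨fun ⟨N, hN⟩ => hx.not_eventually_pos hc1 ha0 h (eventually_atTop.2 ⟨N, hN⟩),
      fun ⟨N, hN⟩ => hx.neg.not_eventually_pos hc1 ha0 h ?_⟩
    exact eventually_atTop.2 ⟨N, fun n hn => neg_pos.2 (hN n hn)⟩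
end

section
/- Let c ∈ [0,1), f : ℝ → ℝ continuous with t·f(t) ≥ 0 for all t, |f(t)| ≤ a|t| for all |t| ≥ t₀ with some a ≤ 1, and lim_{t→0} f(t)/t = +∞. Then every solution of x_{n+1} = c·x_n + f(x_n − x_{n−1}) oscillates. -/
open Filter Topology

private lemma sign_pos' {f : ℝ → ℝ} (hsign : ∀ t, 0 ≤ t * f t) {t : ℝ} (ht : 0 < t) : 0 ≤ f t := by
  have h := hsign t; nlinarith

private lemma sign_neg' {f : ℝ → ℝ} (hsign : ∀ t, 0 ≤ t * f t) {t : ℝ} (ht : t < 0) : f t ≤ 0 := by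
  have h := hsign t; nlinarith

private lemma f_zero' {f : ℝ → ℝ} (hf : Continuous f) (hsign : ∀ t, 0 ≤ t * f t) : f 0 = 0 := by
  have h1 : 0 ≤ f 0 :=
    ge_of_tendsto ((hf.tendsto 0).mono_left nhdsWithin_le_nhds : Filter.Tendsto f (𝓝[>] 0) (𝓝 (f 0)))
      (eventually_nhdsWithin_of_forall fun t ht => sign_pos' hsign ht)
  have h2 : f 0 ≤ 0 :=
    le_of_tendsto ((hf.tendsto 0).mono_left nhdsWithin_le_nhds : Filter.Tendsto f (𝓝[<] 0) (𝓝 (f 0)))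
      (eventually_nhdsWithin_of_forall fun t ht => sign_neg' hsign ht)
  linarith

private lemma sign_nonpos' {f : ℝ → ℝ} (hf : Continuous f) (hsign : ∀ t, 0 ≤ t * f t) {t : ℝ}
    (ht : t ≤ 0) : f t ≤ 0 := by
  rcases ht.lt_or_eq with h | h
  · exact sign_neg' hsign h
  · rw [h, f_zero' hf hsign]

private lemma no_ev_pos (c a t₀ : ℝ) (hc0 : 0 ≤ c) (hc1 : c < 1) (f : ℝ → ℝ)
    (hf : Continuous f) (hsign : ∀ t : ℝ, 0 ≤ t * f t)
    (ht₀ : 0 < t₀) (ha1 : a ≤ 1)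
    (hfb : ∀ t : ℝ, t₀ ≤ |t| → |f t| ≤ a * |t|)
    (hlim : Filter.Tendsto (fun t => f t / t) (nhdsWithin 0 {0}ᶜ) Filter.atTop)
    (x : ℕ → ℝ)
    (hx : ∀ n : ℕ, 1 ≤ n → x (n + 1) = c * x n + f (x n - x (n - 1))) :
    ¬ (∃ N : ℕ, ∀ n : ℕ, N ≤ n → 0 < x n) := by
  rintro ⟨N, hN⟩
  have hrec : ∀ s : ℕ, x (s + 2) = c * x (s + 1) + f (x (s + 1) - x s) := by
    intro s
    have h := hx (s + 1) (by omega)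
    simpa using h
  -- δ from the limit hypothesis: f t ≤ 2 t for negative t near 0
  obtain ⟨δ, hδ0, hδ⟩ : ∃ δ > 0, ∀ t : ℝ, |t| < δ → t < 0 → f t ≤ 2 * t := by
    have h2 : ∀ᶠ t in 𝓝[≠] (0:ℝ), 2 ≤ f t / t := hlim.eventually (eventually_ge_atTop 2)
    rw [eventually_nhdsWithin_iff, Metric.eventually_nhds_iff] at h2
    obtain ⟨ε, hε0, hε⟩ := h2
    refine ⟨ε, hε0, fun t ht htneg => ?_⟩
    have h3 : 2 ≤ f t / t := hε (by simpa [Real.dist_eq] using ht) (by simpa using htneg.ne)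
    rw [le_div_iff_of_neg htneg] at h3
    linarith
  by_cases hmono : ∀ n, N + 1 ≤ n → x n < x (n + 1)
  · -- increasing case
    set y : ℕ → ℝ := fun k => x (N + 1 + k) with hy
    have hyrec : ∀ k, y (k + 2) = c * y (k + 1) + f (y (k + 1) - y k) := by
      intro k
      have h := hrec (N + 1 + k)
      have e1 : N + 1 + k + 2 = N + 1 + (k + 2) := by omega
      have e2 : N + 1 + k + 1 = N + 1 + (k + 1) := by omega
      rw [e1, e2] at h
      exact h
    have hymono : StrictMono y := strictMono_nat_of_lt_succ fun k => by
      have h := hmono (N + 1 + k) (by omega)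
      have e : N + 1 + k + 1 = N + 1 + (k + 1) := by omega
      rw [e] at h
      exact h
    have hypos : ∀ k, 0 < y k := fun k => hN _ (by omega)
    by_cases hbdd : BddAbove (Set.range y)
    · -- bounded: converges to L > 0, forcing L = c * L
      have hL : Tendsto y atTop (𝓝 (⨆ k, y k)) := tendsto_atTop_ciSup hymono.monotone hbdd
      set L := ⨆ k, y k with hLdef
      have hL0 : 0 < L := lt_of_lt_of_le (hypos 0) (le_ciSup hbdd 0)
      have h1 : Tendsto (fun k => y (k + 1)) atTop (𝓝 L) := hL.comp (tendsto_add_atTop_nat 1)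
      have hd : Tendsto (fun k => y (k + 1) - y k) atTop (𝓝 0) := by
        simpa using h1.sub hL
      have hfd : Tendsto (fun k => f (y (k + 1) - y k)) atTop (𝓝 0) := by
        have h := (hf.tendsto 0).comp hd
        rwa [f_zero' hf hsign] at h
      have h2 : Tendsto (fun k => y (k + 2)) atTop (𝓝 L) := hL.comp (tendsto_add_atTop_nat 2)
      have h3 : Tendsto (fun k => c * y (k + 1) + f (y (k + 1) - y k)) atTop (𝓝 (c * L + 0)) :=
        (h1.const_mul c).add hfd
      have hLe : L = c * L + 0 := tendsto_nhds_unique (h2.congr fun k => hyrec k) h3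
      nlinarith
    · -- unbounded: tends to infinity
      have hytop : Tendsto y atTop atTop := by
        apply tendsto_atTop_atTop_of_monotone hymono.monotone
        intro b
        rcases not_bddAbove_iff.mp hbdd b with ⟨z, ⟨k, hk⟩, hz⟩
        exact ⟨k, by rw [hk]; exact hz.le⟩
      obtain ⟨z, hz1, hz2'⟩ := isCompact_Icc.exists_isMaxOn (Set.nonempty_Icc.mpr ht₀.le)
        (hf.continuousOn (s := Set.Icc 0 t₀))
      have hz2 : ∀ u ∈ Set.Icc (0:ℝ) t₀, f u ≤ f z := isMaxOn_iff.mp hz2'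
      set M := f z with hM
      have hM0 : 0 ≤ M := by
        have h := hz2 0 (Set.left_mem_Icc.mpr ht₀.le)
        rwa [f_zero' hf hsign] at h
      have hbound : ∀ u : ℝ, 0 < u → f u ≤ M + u := by
        intro u hu
        rcases le_or_gt u t₀ with h | h
        · have := hz2 u ⟨hu.le, h⟩; linarith
        · have h2 := hfb u (by rw [abs_of_pos hu]; linarith)
          rw [abs_of_pos hu] at h2
          have h3 := le_abs_self (f u)
          nlinarith
      obtain ⟨K, hK⟩ := eventually_atTop.mp (hytop.eventually_ge_atTop ((M + 1) / (1 - c)))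
      set d : ℕ → ℝ := fun k => y (k + 1) - y k with hdd
      have hdpos : ∀ k, 0 < d k := fun k => sub_pos.mpr (hymono (Nat.lt_succ_self k))
      have h1c : 0 < 1 - c := by linarith
      have hstep : ∀ k, K ≤ k → d (k + 1) ≤ d k - 1 := by
        intro k hk
        have hr := hyrec k
        have hb := hbound (d k) (hdpos k)
        have hyk : (M + 1) / (1 - c) ≤ y (k + 1) := hK (k + 1) (by omega)
        rw [div_le_iff₀ h1c] at hyk
        have he : d (k + 1) = (c - 1) * y (k + 1) + f (d k) := by
          simp only [hdd]; rw [hr]; ring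
        rw [he]
        have : f (d k) ≤ M + d k := hb
        nlinarith
      have hiter : ∀ j : ℕ, d (K + j) ≤ d K - j := by
        intro j
        induction j with
        | zero => simp
        | succ j ih =>
          have h := hstep (K + j) (by omega)
          have e : K + (j + 1) = K + j + 1 := by omega
          rw [e]
          push_cast
          push_cast at ih
          linarith
      have h1 := hiter (⌈d K⌉₊ + 1)
      have h2 := Nat.le_ceil (d K)
      have h3 := hdpos (K + (⌈d K⌉₊ + 1))
      push_cast at h1
      linarith
  · -- not eventually increasing: eventually geometrically decreasing case
    push_neg at hmono
    obtain ⟨m, hm, hxm⟩ := hmono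
    have claim1 : ∀ k : ℕ, x (m + k + 2) ≤ c * x (m + k + 1) := by
      intro k
      induction k with
      | zero =>
        have hr := hrec m
        have harg : x (m + 1) - x m ≤ 0 := by linarith
        have hfn := sign_nonpos' hf hsign harg
        have e : m + 0 + 2 = m + 2 := by omega
        have e2 : m + 0 + 1 = m + 1 := by omega
        rw [e, e2, hr]
        linarith
      | succ k ih =>
        have hr := hrec (m + k + 1)
        have hp : 0 < x (m + k + 1) := hN _ (by omega)
        have harg : x (m + k + 1 + 1) - x (m + k + 1) ≤ 0 := by
          have e : m + k + 1 + 1 = m + k + 2 := by omega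
          rw [e]; nlinarith
        have hfn := sign_nonpos' hf hsign harg
        have e1 : m + (k + 1) + 2 = m + k + 1 + 2 := by omega
        have e2 : m + (k + 1) + 1 = m + k + 1 + 1 := by omega
        rw [e1, e2, hr]
        linarith
    have claim2 : ∀ k : ℕ, x (m + 1 + k) ≤ x (m + 1) * c ^ k := by
      intro k
      induction k with
      | zero => simp
      | succ k ih =>
        have h := claim1 k
        have e : m + 1 + (k + 1) = m + k + 2 := by omega
        have e2 : m + 1 + k = m + k + 1 := by omega
        rw [e]
        rw [e2] at ih
        calc x (m + k + 2) ≤ c * x (m + k + 1) := h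
          _ ≤ c * (x (m + 1) * c ^ k) := mul_le_mul_of_nonneg_left ih hc0
          _ = x (m + 1) * c ^ (k + 1) := by ring
    have xlim : Tendsto (fun k => x (m + 1 + k)) atTop (𝓝 0) := by
      have hup : Tendsto (fun k : ℕ => x (m + 1) * c ^ k) atTop (𝓝 (x (m + 1) * 0)) :=
        (tendsto_pow_atTop_nhds_zero_of_lt_one hc0 hc1).const_mul (x (m + 1))
      rw [mul_zero] at hup
      exact tendsto_of_tendsto_of_tendsto_of_le_of_le tendsto_const_nhds hup
        (fun k => (hN _ (by omega)).le) claim2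
    set d : ℕ → ℝ := fun k => x (m + 1 + (k + 1)) - x (m + 1 + k) with hdd
    have dlim : Tendsto d atTop (𝓝 0) := by
      have h1 : Tendsto (fun k => x (m + 1 + (k + 1))) atTop (𝓝 0) :=
        xlim.comp (tendsto_add_atTop_nat 1)
      simpa [hdd] using h1.sub xlim
    have drec : ∀ k, d (k + 1) = (c - 1) * x (m + 1 + (k + 1)) + f (d k) := by
      intro k
      have hr := hrec (m + 1 + k)
      have e1 : m + 1 + k + 2 = m + 1 + (k + 1 + 1) := by omega
      have e2 : m + 1 + k + 1 = m + 1 + (k + 1) := by omega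
      rw [e1, e2] at hr
      simp only [hdd]
      rw [hr]
      ring
    have dneg : ∀ k, 1 ≤ k → d k < 0 := by
      intro k hk
      obtain ⟨j, rfl⟩ : ∃ j, k = j + 1 := ⟨k - 1, by omega⟩
      have h := claim1 (j + 1)
      have hp : 0 < x (m + (j + 1) + 1) := hN _ (by omega)
      have e1 : m + 1 + (j + 1 + 1) = m + (j + 1) + 2 := by omega
      have e2 : m + 1 + (j + 1) = m + (j + 1) + 1 := by omega
      simp only [hdd]
      rw [e1, e2]
      nlinarith
    obtain ⟨K₁, hK₁⟩ : ∃ K₁, ∀ k, K₁ ≤ k → |d k| < δ := by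
      obtain ⟨K₁, hK₁⟩ := Metric.tendsto_atTop.mp dlim δ hδ0
      exact ⟨K₁, fun k hk => by simpa [Real.dist_eq] using hK₁ k hk⟩
    set k₁ := K₁ + 1 with hk₁
    have hstep2 : ∀ k, k₁ ≤ k → d (k + 1) ≤ 2 * d k := by
      intro k hk
      have hdn : d k < 0 := dneg k (by omega)
      have hdb : |d k| < δ := hK₁ k (by omega)
      have hfd : f (d k) ≤ 2 * d k := hδ (d k) hdb hdn
      have hp : 0 < x (m + 1 + (k + 1)) := hN _ (by omega)
      have hr := drec k
      nlinarith
    have hiter2 : ∀ j : ℕ, d (k₁ + j) ≤ 2 ^ j * d k₁ := by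
      intro j
      induction j with
      | zero => simp
      | succ j ih =>
        have h := hstep2 (k₁ + j) (by omega)
        have e : k₁ + (j + 1) = k₁ + j + 1 := by omega
        rw [e]
        calc d (k₁ + j + 1) ≤ 2 * d (k₁ + j) := h
          _ ≤ 2 * (2 ^ j * d k₁) := by linarith
          _ = 2 ^ (j + 1) * d k₁ := by ring
    have hdk₁ : d k₁ < 0 := dneg k₁ (by omega)
    obtain ⟨j, hj⟩ := pow_unbounded_of_one_lt (δ / (-d k₁)) (one_lt_two (α := ℝ))
    have h1 := hiter2 j
    have h2 : |d (k₁ + j)| < δ := hK₁ _ (by omega)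
    rw [abs_lt] at h2
    rw [div_lt_iff₀ (by linarith)] at hj
    nlinarith [h1, h2.1, hj]


theorem stmt18 (c a t₀ : ℝ) (hc0 : 0 ≤ c) (hc1 : c < 1) (f : ℝ → ℝ)
    (hf : Continuous f) (hsign : ∀ t : ℝ, 0 ≤ t * f t)
    (ht₀ : 0 < t₀) (ha1 : a ≤ 1)
    (hfb : ∀ t : ℝ, t₀ ≤ |t| → |f t| ≤ a * |t|)
    (hlim : Filter.Tendsto (fun t => f t / t) (nhdsWithin 0 {0}ᶜ) Filter.atTop)
    (x : ℕ → ℝ)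
    (hx : ∀ n : ℕ, 1 ≤ n → x (n + 1) = c * x n + f (x n - x (n - 1))) :
    ¬ (∃ N : ℕ, ∀ n : ℕ, N ≤ n → 0 < x n) ∧
    ¬ (∃ N : ℕ, ∀ n : ℕ, N ≤ n → x n < 0) := by
  constructor
  · exact no_ev_pos c a t₀ hc0 hc1 f hf hsign ht₀ ha1 hfb hlim x hx
  · set g : ℝ → ℝ := fun t => -f (-t) with hg
    set y : ℕ → ℝ := fun n => -x n with hy
    have hgf : Continuous g := (hf.comp continuous_neg).neg
    have hgsign : ∀ t : ℝ, 0 ≤ t * g t := by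
      intro t
      have h := hsign (-t)
      have e : t * g t = (-t) * f (-t) := by simp only [hg]; ring
      rw [e]; exact h
    have hgb : ∀ t : ℝ, t₀ ≤ |t| → |g t| ≤ a * |t| := by
      intro t ht
      have h := hfb (-t) (by rwa [abs_neg])
      rw [abs_neg] at h
      simpa [hg, abs_neg] using h
    have hneg : Filter.Tendsto (fun t : ℝ => -t) (nhdsWithin 0 {0}ᶜ) (nhdsWithin 0 {0}ᶜ) := by
      rw [tendsto_nhdsWithin_iff]
      constructor
      · simpa using (continuous_neg.tendsto (0:ℝ)).mono_left nhdsWithin_le_nhds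
      · filter_upwards [self_mem_nhdsWithin] with t ht
        simp only [Set.mem_compl_iff, Set.mem_singleton_iff] at ht ⊢
        simpa using ht
    have hglim : Filter.Tendsto (fun t => g t / t) (nhdsWithin 0 {0}ᶜ) Filter.atTop := by
      have h := hlim.comp hneg
      apply h.congr
      intro t
      show f (-t) / (-t) = g t / t
      rw [div_neg]
      simp only [hg]
      rw [neg_div]
    have hyx : ∀ n : ℕ, 1 ≤ n → y (n + 1) = c * y n + g (y n - y (n - 1)) := by
      intro n hn
      have h := hx n hn
      simp only [hy, hg]
      have e : -(-x n - -x (n - 1)) = x n - x (n - 1) := by ring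
      rw [e, h]
      ring
    intro ⟨N, hN⟩
    exact no_ev_pos c a t₀ hc0 hc1 g hgf hgsign ht₀ ha1 hgb hglim y hyx
      ⟨N, fun n hn => by simpa [hy] using hN n hn⟩
end
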